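/- arXiv:2211.07654 — 11 statements merged into one kernel-verified Lean document; each statement's English description precedes it below -/
import Mathlib

section
/- Let d ≥ 2 be an integer and r_0 > 0. Let B : (r_0, ∞) → ℝ be continuously differentiable with B(r) > 0 for all r > r_0, and define Φ(r) = ∫_{r_0}^r √(B(ρ)) / (ρ · √((ρ/r_0)^(2d−2) − 1)) dρ for r > r_0. Then Φ is twice differentiable on (r_0, ∞) and for every r > r_0 it satisfies r·B(r)·Φ''(r) + (d−1)·r²·Φ'(r)³ + Φ'(r)·(d·B(r) − (r/2)·B'(r)) = 0. -/
open MeasureTheory Set Filter Topology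

/-!
The ODE is first order in `u = Φ'`, and it is solved both by the integrand
`u = √B / (r √((r/r₀)^(2d-2) - 1))` and by `u = 0`. If the integrand is integrable near `r₀`,
the fundamental theorem of calculus gives `Φ' = u` on `(r₀, ∞)`; otherwise the interval integral
defining `Φ` takes its junk value `0` on all of `(r₀, ∞)`, and `Φ' = 0` there.
-/

section IntegralOnIoi

variable {f : ℝ → ℝ} {a : ℝ}

lemma intervalIntegrable_of_continuousOn_Ioi (hf : ContinuousOn f (Ioi a)) {r s : ℝ}
    (hr : r ∈ Ioi a) (hs : s ∈ Ioi a) (hint : IntervalIntegrable f volume a r) :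
    IntervalIntegrable f volume a s := by
  rcases le_or_gt s r with hsr | hrs
  · exact hint.mono_set (uIcc_subset_uIcc left_mem_uIcc (mem_uIcc.2 (Or.inl ⟨hs.le, hsr⟩)))
  · refine hint.trans (ContinuousOn.intervalIntegrable (hf.mono ?_))
    rw [uIcc_of_le hrs.le]
    exact fun x hx => lt_of_lt_of_le hr hx.1

lemma hasDerivAt_integral_or_hasDerivAt_zero (hf : ContinuousOn f (Ioi a)) :
    (∀ s ∈ Ioi a, HasDerivAt (fun u => ∫ ρ in a..u, f ρ) (f s) s) ∨
      ∀ s ∈ Ioi a, HasDerivAt (fun u => ∫ ρ in a..u, f ρ) 0 s := by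
  by_cases hint : ∃ r ∈ Ioi a, IntervalIntegrable f volume a r
  · obtain ⟨r, hr, hint⟩ := hint
    exact Or.inl fun s hs => intervalIntegral.integral_hasDerivAt_right
      (intervalIntegrable_of_continuousOn_Ioi hf hr hs hint)
      (hf.stronglyMeasurableAtFilter isOpen_Ioi s hs)
      ((hf s hs).continuousAt (isOpen_Ioi.mem_nhds hs))
  · push Not at hint
    refine Or.inr fun s hs => (hasDerivAt_const s (0 : ℝ)).congr_of_eventuallyEq ?_
    filter_upwards [isOpen_Ioi.mem_nhds hs] with t ht
    exact intervalIntegral.integral_undef (hint t ht)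

end IntegralOnIoi

lemma hasDerivAt_deriv_of_forall_mem_nhds {Φ u : ℝ → ℝ} {U : Set ℝ} {r u' : ℝ}
    (hU : U ∈ 𝓝 r) (hΦ : ∀ s ∈ U, HasDerivAt Φ (u s) s) (hu : HasDerivAt u u' r) :
    HasDerivAt (deriv Φ) u' r :=
  hu.congr_of_eventuallyEq (eventually_of_mem hU fun s hs => (hΦ s hs).deriv)

lemma hasDerivAt_div_const_pow (c : ℝ) (n : ℕ) {r : ℝ} (hr : r ≠ 0) :
    HasDerivAt (fun ρ => (ρ / c) ^ n) (n * (r / c) ^ n / r) r := by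
  refine (((hasDerivAt_id' r).div_const c).fun_pow n).congr_deriv ?_
  rcases n with _ | n
  · simp
  · rw [pow_succ, Nat.add_sub_cancel]
    field_simp

section StripIntegrand

noncomputable def stripIntegrand (d : ℕ) (r₀ : ℝ) (B : ℝ → ℝ) (ρ : ℝ) : ℝ :=
  Real.sqrt (B ρ) / (ρ * Real.sqrt ((ρ / r₀) ^ (2 * d - 2) - 1))

variable {d : ℕ} {r₀ : ℝ} {B : ℝ → ℝ}

lemma div_pow_sub_one_pos {n : ℕ} (hn : n ≠ 0) {ρ : ℝ} (hr₀ : 0 < r₀) (hρ : r₀ < ρ) :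
    0 < (ρ / r₀) ^ n - 1 :=
  sub_pos.2 (one_lt_pow₀ ((one_lt_div hr₀).2 hρ) hn)

lemma hasDerivAt_stripIntegrand (hd : 2 ≤ d) (hr₀ : 0 < r₀) {B' r : ℝ} (hr : r₀ < r)
    (hB : HasDerivAt B B' r) (hBr : 0 < B r) :
    HasDerivAt (stripIntegrand d r₀ B)
      (stripIntegrand d r₀ B r * (B' / (2 * B r) - 1 / r -
        (d - 1) * (r / r₀) ^ (2 * d - 2) / (r * ((r / r₀) ^ (2 * d - 2) - 1)))) r := by
  have hrpos : 0 < r := hr₀.trans hr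
  have hG := div_pow_sub_one_pos (n := 2 * d - 2) (by omega) hr₀ hr
  have hsG := Real.sqrt_pos.2 hG
  refine ((hB.sqrt hBr.ne').div ((hasDerivAt_id' r).mul
    (((hasDerivAt_div_const_pow r₀ (2 * d - 2) hrpos.ne').sub_const 1).sqrt hG.ne'))
    (mul_pos hrpos hsG).ne').congr_deriv ?_
  simp only [stripIntegrand, Pi.mul_apply]
  have e1 := Real.sq_sqrt hBr.le
  have e2 := Real.sq_sqrt hG.le
  push_cast [Nat.cast_sub (by omega : 2 ≤ 2 * d)]
  field_simp
  rw [e1, e2]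
  ring

lemma sq_stripIntegrand (hd : 2 ≤ d) (hr₀ : 0 < r₀) {r : ℝ} (hr : r₀ < r) (hBr : 0 ≤ B r) :
    stripIntegrand d r₀ B r ^ 2 = B r / (r ^ 2 * ((r / r₀) ^ (2 * d - 2) - 1)) := by
  rw [stripIntegrand, div_pow, mul_pow, Real.sq_sqrt hBr,
    Real.sq_sqrt (div_pow_sub_one_pos (by omega) hr₀ hr).le]

lemma stripIntegrand_ode (hd : 2 ≤ d) (hr₀ : 0 < r₀) {B' r : ℝ} (hr : r₀ < r)
    (hB : HasDerivAt B B' r) (hBr : 0 < B r) :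
    ∃ u', HasDerivAt (stripIntegrand d r₀ B) u' r ∧
      r * B r * u' + ((d : ℝ) - 1) * r ^ 2 * stripIntegrand d r₀ B r ^ 3 +
        stripIntegrand d r₀ B r * ((d : ℝ) * B r - (r / 2) * B') = 0 := by
  refine ⟨_, hasDerivAt_stripIntegrand hd hr₀ hr hB hBr, ?_⟩
  have hrpos : 0 < r := hr₀.trans hr
  have hG := div_pow_sub_one_pos (n := 2 * d - 2) (by omega) hr₀ hr
  have hsq := sq_stripIntegrand hd hr₀ hr hBr.le
  set u := stripIntegrand d r₀ B r
  set X := (r / r₀) ^ (2 * d - 2)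
  clear_value u X
  field_simp
  field_simp at hsq
  linear_combination 2 * ((d : ℝ) - 1) * u * hsq

end StripIntegrand

theorem strip_extremal_surface_ode_general
    (d : ℕ) (hd : 2 ≤ d) (r₀ : ℝ) (hr₀ : 0 < r₀)
    (B B' : ℝ → ℝ)
    (hB : ∀ r ∈ Set.Ioi r₀, HasDerivAt B (B' r) r)
    (hBpos : ∀ r ∈ Set.Ioi r₀, 0 < B r)
    (Φ : ℝ → ℝ)
    (hΦ : ∀ r, Φ r = ∫ ρ in r₀..r,
      Real.sqrt (B ρ) / (ρ * Real.sqrt ((ρ / r₀) ^ (2 * d - 2) - 1))) :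
    ∀ r ∈ Set.Ioi r₀,
      DifferentiableAt ℝ Φ r ∧ DifferentiableAt ℝ (deriv Φ) r ∧
      r * B r * deriv (deriv Φ) r + ((d : ℝ) - 1) * r ^ 2 * (deriv Φ r) ^ 3 +
        deriv Φ r * ((d : ℝ) * B r - (r / 2) * B' r) = 0 := by
  obtain rfl : Φ = fun u => ∫ ρ in r₀..u, stripIntegrand d r₀ B ρ := funext hΦ
  have hcont : ContinuousOn (stripIntegrand d r₀ B) (Ioi r₀) := fun s hs =>
    (hasDerivAt_stripIntegrand hd hr₀ hs (hB s hs) (hBpos s hs)).continuousAt.continuousWithinAt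
  intro r hr
  obtain ⟨u, u', hΦu, hu, hode⟩ : ∃ (u : ℝ → ℝ) (u' : ℝ),
      (∀ s ∈ Ioi r₀, HasDerivAt (fun v => ∫ ρ in r₀..v, stripIntegrand d r₀ B ρ) (u s) s) ∧
      HasDerivAt u u' r ∧
      r * B r * u' + ((d : ℝ) - 1) * r ^ 2 * u r ^ 3 +
        u r * ((d : ℝ) * B r - (r / 2) * B' r) = 0 := by
    rcases hasDerivAt_integral_or_hasDerivAt_zero hcont with hint | hzero
    · obtain ⟨u', hu, hode⟩ := stripIntegrand_ode hd hr₀ hr (hB r hr) (hBpos r hr)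
      exact ⟨_, u', hint, hu, hode⟩
    · exact ⟨0, 0, hzero, hasDerivAt_const r 0, by simp⟩
  have hΦ'' := hasDerivAt_deriv_of_forall_mem_nhds (isOpen_Ioi.mem_nhds hr) hΦu hu
  refine ⟨(hΦu r hr).differentiableAt, hΦ''.differentiableAt, ?_⟩
  rwa [hΦ''.deriv, (hΦu r hr).deriv]

/-- The integral formula `Φ(r) = ∫_{r₀}^r √(B(ρ)) / (ρ √((ρ/r₀)^(2d−2) − 1)) dρ`
solves the extremality ODE `r B Φ'' + (d−1) r² (Φ')³ + Φ'(d B − (r/2) B') = 0` on `(r₀, ∞)`. -/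
theorem strip_extremal_surface_ode
    (d : ℕ) (hd : 2 ≤ d) (r₀ : ℝ) (hr₀ : 0 < r₀)
    (B B' : ℝ → ℝ)
    (hB : ∀ r ∈ Set.Ioi r₀, HasDerivAt B (B' r) r)
    (hB'cont : ContinuousOn B' (Set.Ioi r₀))
    (hBpos : ∀ r ∈ Set.Ioi r₀, 0 < B r)
    (Φ : ℝ → ℝ)
    (hΦ : ∀ r, Φ r = ∫ ρ in r₀..r,
      Real.sqrt (B ρ) / (ρ * Real.sqrt ((ρ / r₀) ^ (2 * d - 2) - 1))) :
    ∀ r ∈ Set.Ioi r₀,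
      DifferentiableAt ℝ Φ r ∧ DifferentiableAt ℝ (deriv Φ) r ∧
      r * B r * deriv (deriv Φ) r + ((d : ℝ) - 1) * r ^ 2 * (deriv Φ r) ^ 3 +
        deriv Φ r * ((d : ℝ) * B r - (r / 2) * B' r) = 0 :=
  strip_extremal_surface_ode_general d hd r₀ hr₀ B B' hB hBpos Φ hΦ
end

section
/- Let d ≥ 2 be an integer and L, r_0 > 0. Let B : (r_0, ∞) → ℝ be a measurable function with B(ρ) ≥ L²/ρ² for all ρ > r_0, and suppose ℓ := 2L ∫_{r_0}^∞ √(B(ρ)) / (ρ · √((ρ/r_0)^(2d−2) − 1)) dρ is finite. Then ℓ ≥ (2L²/r_0) · √π · Γ(d/(2(d−1))) / Γ(1/(2(d−1))), i.e. L²/r_0 ≤ [Γ(1/(2(d−1))) / (2√π Γ(d/(2(d−1))))] · ℓ, with equality when B(ρ) = L²/ρ² for all ρ. In particular r_0 ≥ r_{0,vac}, where r_{0,vac} := (2L²/ℓ) · √π Γ(d/(2(d−1))) / Γ(1/(2(d−1))) is the value of r_0 produced by B(ρ) = L²/ρ² at the same ℓ. -/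
/-!
Since `B ρ ≥ L²/ρ²`, the width integral dominates the one for `B ρ = L²/ρ²`. After the scaling
`ρ = r₀ u` and the substitution `t = u^(-n)`, `n = 2d - 2`, that vacuum integral becomes the Beta
integral `B(1/n + 1/2, 1/2) / n`, which produces the Gamma factors; the other bounds are
rearrangements of this one.
-/

open MeasureTheory Set Real

theorem Real.integral_Ioo_rpow_mul_one_sub_rpow {a b : ℝ} (ha : 0 < a) (hb : 0 < b) :
    ∫ x in Ioo (0 : ℝ) 1, x ^ (a - 1) * (1 - x) ^ (b - 1) =
      Gamma a * Gamma b / Gamma (a + b) := by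
  have hbeta := Complex.betaIntegral_eq_Gamma_mul_div a b (by simpa using ha) (by simpa using hb)
  rw [Complex.betaIntegral, intervalIntegral.integral_of_le zero_le_one,
    integral_Ioc_eq_integral_Ioo,
    setIntegral_congr_fun measurableSet_Ioo
      (g := fun x : ℝ => ((x ^ (a - 1) * (1 - x) ^ (b - 1) : ℝ) : ℂ)) (fun x hx => by
        dsimp only
        rw [Complex.ofReal_mul, Complex.ofReal_cpow hx.1.le,
          Complex.ofReal_cpow (sub_nonneg.2 hx.2.le)]
        push_cast; ring),
    integral_complex_ofReal, ← Complex.ofReal_add, Complex.Gamma_ofReal, Complex.Gamma_ofReal,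
    Complex.Gamma_ofReal] at hbeta
  exact_mod_cast hbeta

theorem image_rpow_neg_Ioi_one {n : ℝ} (hn : 0 < n) :
    (fun u : ℝ => u ^ (-n)) '' Ioi 1 = Ioo 0 1 := by
  ext t
  constructor
  · rintro ⟨u, hu, rfl⟩
    exact ⟨rpow_pos_of_pos (zero_lt_one.trans hu) _,
      rpow_lt_one_of_one_lt_of_neg hu (neg_neg_of_pos hn)⟩
  · rintro ⟨ht₀, ht₁⟩
    refine ⟨t ^ (-n)⁻¹, one_lt_rpow_of_pos_of_lt_one_of_neg ht₀ ht₁ (by simpa using hn), ?_⟩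
    exact rpow_inv_rpow ht₀.le (neg_ne_zero.2 hn.ne')

theorem integral_Ioo_zero_one_eq_integral_Ioi_one_rpow_neg {n : ℝ} (hn : 0 < n) (g : ℝ → ℝ) :
    ∫ t in Ioo 0 1, g t = ∫ u in Ioi 1, n * u ^ (-n - 1) * g (u ^ (-n)) := by
  have hderiv : ∀ u ∈ Ioi (1 : ℝ),
      HasDerivWithinAt (fun u : ℝ => u ^ (-n)) (-n * u ^ (-n - 1)) (Ioi 1) u := fun u hu =>
    (hasDerivAt_rpow_const (Or.inl (zero_lt_one.trans hu).ne')).hasDerivWithinAt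
  have hinj : InjOn (fun u : ℝ => u ^ (-n)) (Ioi 1) :=
    ((strictAntiOn_rpow_Ioi_of_exponent_neg (neg_neg_of_pos hn)).mono
      (Ioi_subset_Ioi zero_le_one)).injOn
  rw [← image_rpow_neg_Ioi_one hn,
    integral_image_eq_integral_abs_deriv_smul measurableSet_Ioi hderiv hinj]
  refine setIntegral_congr_fun measurableSet_Ioi fun u hu => ?_
  rw [smul_eq_mul, abs_mul, abs_neg, abs_of_pos hn,
    abs_of_pos (rpow_pos_of_pos (zero_lt_one.trans hu) _)]

theorem jacobian_mul_beta_integrand_comp_rpow_neg {n u : ℝ} (hn : 0 < n) (hu : 1 < u) :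
    u ^ (-n - 1) * ((u ^ (-n)) ^ (1 / n + 1 / 2 - 1) * (1 - u ^ (-n)) ^ (1 / 2 - 1 : ℝ)) =
      1 / (u ^ 2 * √(u ^ n - 1)) := by
  have hu₀ : 0 < u := zero_lt_one.trans hu
  have hun : 1 < u ^ n := one_lt_rpow hu hn
  have hsub : 1 - u ^ (-n) = (u ^ n - 1) * u ^ (-n) := by
    rw [sub_mul, rpow_neg hu₀.le, mul_inv_cancel₀ (by positivity), one_mul]
  rw [hsub, mul_rpow (by linarith) (by positivity), ← rpow_mul hu₀.le,
    ← rpow_mul hu₀.le, show (1 / 2 - 1 : ℝ) = -(1 / 2) by norm_num,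
    rpow_neg (by linarith), ← sqrt_eq_rpow]
  have hexp : u ^ (-n - 1) * u ^ (-n * (1 / n + 1 / 2 - 1)) * u ^ (-n * -(1 / 2)) = (u ^ 2)⁻¹ := by
    rw [← rpow_add hu₀, ← rpow_add hu₀, ← rpow_natCast, ← rpow_neg hu₀.le]
    congr 1
    field_simp
    push_cast
    ring
  calc _ = u ^ (-n - 1) * u ^ (-n * (1 / n + 1 / 2 - 1)) * u ^ (-n * -(1 / 2)) *
        (√(u ^ n - 1))⁻¹ := by ring
    _ = _ := by rw [hexp, ← mul_inv, one_div]

theorem integral_Ioi_one_div_sq_mul_sqrt_rpow_sub_one {n : ℝ} (hn : 0 < n) :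
    ∫ u in Ioi 1, 1 / (u ^ 2 * √(u ^ n - 1)) =
      √π * Gamma (1 / n + 1 / 2) / Gamma (1 / n) := by
  have hbeta := integral_Ioo_rpow_mul_one_sub_rpow (a := 1 / n + 1 / 2) (b := 1 / 2)
    (by positivity) one_half_pos
  rw [integral_Ioo_zero_one_eq_integral_Ioi_one_rpow_neg hn,
    setIntegral_congr_fun measurableSet_Ioi fun u hu => by
      rw [mul_assoc, jacobian_mul_beta_integrand_comp_rpow_neg hn hu],
    integral_const_mul, Gamma_one_half_eq, add_assoc, add_halves,
    Gamma_add_one (by positivity)] at hbeta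
  have hΓ : Gamma (1 / n) ≠ 0 := (Gamma_pos_of_pos (by positivity)).ne'
  field_simp at hbeta ⊢
  linarith

theorem integral_Ioi_div_mul_sqrt_div_rpow_sub_one (L : ℝ) {r n : ℝ} (hr : 0 < r) (hn : 0 < n) :
    ∫ ρ in Ioi r, L / ρ / (ρ * √((ρ / r) ^ n - 1)) =
      L / r * (√π * Gamma (1 / n + 1 / 2) / Gamma (1 / n)) := by
  have hscale := integral_comp_mul_left_Ioi (fun ρ => L / ρ / (ρ * √((ρ / r) ^ n - 1))) 1 hr
  rw [mul_one, setIntegral_congr_fun measurableSet_Ioi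
    (g := fun u => L / r ^ 2 * (1 / (u ^ 2 * √(u ^ n - 1)))) fun u hu => by
      dsimp only
      rw [mul_div_cancel_left₀ _ hr.ne']
      field_simp,
    integral_const_mul, integral_Ioi_one_div_sq_mul_sqrt_rpow_sub_one hn, smul_eq_mul] at hscale
  rw [eq_inv_mul_iff_mul_eq₀ hr.ne'] at hscale
  rw [← hscale]
  field_simp

theorem integrableOn_Ioi_div_mul_sqrt_div_rpow_sub_one (L : ℝ) {r n : ℝ} (hr : 0 < r)
    (hn : 0 < n) : IntegrableOn (fun ρ => L / ρ / (ρ * √((ρ / r) ^ n - 1))) (Ioi r) := by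
  rcases eq_or_ne L 0 with rfl | hL
  · simp
  -- A function whose integral is nonzero is integrable, since non-integrable ones integrate to 0.
  refine Integrable.of_integral_ne_zero ?_
  rw [integral_Ioi_div_mul_sqrt_div_rpow_sub_one L hr hn]
  exact mul_ne_zero (div_ne_zero hL hr.ne') (by positivity)

theorem le_integral_sqrt_div_mul_sqrt_div_rpow_sub_one {L r n : ℝ} {B : ℝ → ℝ} (hr : 0 < r)
    (hn : 0 < n) (hB : ∀ ρ ∈ Ioi r, L ^ 2 / ρ ^ 2 ≤ B ρ)
    (hint : IntegrableOn (fun ρ => √(B ρ) / (ρ * √((ρ / r) ^ n - 1))) (Ioi r)) :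
    L / r * (√π * Gamma (1 / n + 1 / 2) / Gamma (1 / n)) ≤
      ∫ ρ in Ioi r, √(B ρ) / (ρ * √((ρ / r) ^ n - 1)) := by
  rw [← integral_Ioi_div_mul_sqrt_div_rpow_sub_one L hr hn]
  refine setIntegral_mono_on (integrableOn_Ioi_div_mul_sqrt_div_rpow_sub_one L hr hn) hint
    measurableSet_Ioi fun ρ hρ => div_le_div_of_nonneg_right ?_ (by positivity [hr.trans hρ])
  calc L / ρ ≤ |L / ρ| := le_abs_self _
    _ = √(L ^ 2 / ρ ^ 2) := by rw [← div_pow, sqrt_sq_eq_abs]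
    _ ≤ √(B ρ) := sqrt_le_sqrt (hB ρ hρ)

theorem integral_sqrt_div_mul_sqrt_div_rpow_sub_one_of_eq {L r n : ℝ} {B : ℝ → ℝ} (hL : 0 ≤ L)
    (hr : 0 < r) (hn : 0 < n) (hB : ∀ ρ ∈ Ioi r, B ρ = L ^ 2 / ρ ^ 2) :
    ∫ ρ in Ioi r, √(B ρ) / (ρ * √((ρ / r) ^ n - 1)) =
      L / r * (√π * Gamma (1 / n + 1 / 2) / Gamma (1 / n)) := by
  rw [← integral_Ioi_div_mul_sqrt_div_rpow_sub_one L hr hn]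
  refine setIntegral_congr_fun measurableSet_Ioi fun ρ hρ => ?_
  rw [hB ρ hρ, ← div_pow, sqrt_sq (div_nonneg hL (hr.trans hρ).le)]

theorem strip_tip_radius_bound_general
    (d : ℕ) (hd : 2 ≤ d) (L r₀ : ℝ) (hL : 0 < L) (hr₀ : 0 < r₀)
    (B : ℝ → ℝ)
    (hBlb : ∀ ρ ∈ Set.Ioi r₀, L ^ 2 / ρ ^ 2 ≤ B ρ)
    (hInt : IntegrableOn
      (fun ρ : ℝ => Real.sqrt (B ρ) / (ρ * Real.sqrt ((ρ / r₀) ^ (2 * d - 2) - 1)))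
      (Set.Ioi r₀))
    (ℓ : ℝ)
    (hℓ : ℓ = 2 * L * ∫ ρ in Set.Ioi r₀,
      Real.sqrt (B ρ) / (ρ * Real.sqrt ((ρ / r₀) ^ (2 * d - 2) - 1))) :
    (2 * L ^ 2 / r₀) * Real.sqrt Real.pi *
        Real.Gamma ((d : ℝ) / (2 * ((d : ℝ) - 1))) /
        Real.Gamma (1 / (2 * ((d : ℝ) - 1))) ≤ ℓ ∧
    L ^ 2 / r₀ ≤ (Real.Gamma (1 / (2 * ((d : ℝ) - 1))) /
        (2 * Real.sqrt Real.pi * Real.Gamma ((d : ℝ) / (2 * ((d : ℝ) - 1))))) * ℓ ∧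
    ((∀ ρ ∈ Set.Ioi r₀, B ρ = L ^ 2 / ρ ^ 2) →
      ℓ = (2 * L ^ 2 / r₀) * Real.sqrt Real.pi *
        Real.Gamma ((d : ℝ) / (2 * ((d : ℝ) - 1))) /
        Real.Gamma (1 / (2 * ((d : ℝ) - 1)))) ∧
    (2 * L ^ 2 / ℓ) * Real.sqrt Real.pi *
        Real.Gamma ((d : ℝ) / (2 * ((d : ℝ) - 1))) /
        Real.Gamma (1 / (2 * ((d : ℝ) - 1))) ≤ r₀ := by
  set n : ℝ := 2 * ((d : ℝ) - 1) with hn_def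
  have hn : 0 < n := by
    have : (2 : ℝ) ≤ d := by exact_mod_cast hd
    linarith
  have hpow : ∀ ρ : ℝ, (ρ / r₀) ^ (2 * d - 2) = (ρ / r₀) ^ n := fun ρ => by
    rw [← rpow_natCast, Nat.cast_sub (by omega), hn_def]
    push_cast
    ring_nf
  have harg : (d : ℝ) / n = 1 / n + 1 / 2 := by
    field_simp
    ring
  simp only [hpow] at hInt hℓ
  rw [harg]
  have hΓ₁ : 0 < Gamma (1 / n + 1 / 2) := Gamma_pos_of_pos (by positivity)
  have hΓ₂ : 0 < Gamma (1 / n) := Gamma_pos_of_pos (by positivity)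
  have hvac : 2 * L ^ 2 / r₀ * √π * Gamma (1 / n + 1 / 2) / Gamma (1 / n) =
      2 * L * (L / r₀ * (√π * Gamma (1 / n + 1 / 2) / Gamma (1 / n))) := by ring
  have hwidth : 2 * L ^ 2 / r₀ * √π * Gamma (1 / n + 1 / 2) / Gamma (1 / n) ≤ ℓ := by
    rw [hvac, hℓ]
    gcongr
    exact le_integral_sqrt_div_mul_sqrt_div_rpow_sub_one hr₀ hn hBlb hInt
  have hℓ₀ : 0 < ℓ := lt_of_lt_of_le (by positivity) hwidth
  refine ⟨hwidth, ?_, fun hB => ?_, ?_⟩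
  · calc L ^ 2 / r₀ = Gamma (1 / n) / (2 * √π * Gamma (1 / n + 1 / 2)) *
          (2 * L ^ 2 / r₀ * √π * Gamma (1 / n + 1 / 2) / Gamma (1 / n)) := by
          field_simp
      _ ≤ _ := by gcongr
  · rw [hvac, hℓ, integral_sqrt_div_mul_sqrt_div_rpow_sub_one_of_eq hL.le hr₀ hn hB]
  · calc 2 * L ^ 2 / ℓ * √π * Gamma (1 / n + 1 / 2) / Gamma (1 / n) =
          2 * L ^ 2 / r₀ * √π * Gamma (1 / n + 1 / 2) / Gamma (1 / n) * r₀ / ℓ := by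
          field_simp
      _ ≤ ℓ * r₀ / ℓ := by gcongr
      _ = r₀ := by field_simp

/-- Tip-radius bound for the HRT surface of a strip of width
`ℓ = 2L ∫_{r₀}^∞ √B(ρ)/(ρ √((ρ/r₀)^(2d−2) − 1)) dρ` when `B(ρ) ≥ L²/ρ²`,
with equality for `B(ρ) = L²/ρ²`, and the consequence `r₀ ≥ r_{0,vac}`. -/
theorem strip_tip_radius_bound
    (d : ℕ) (hd : 2 ≤ d) (L r₀ : ℝ) (hL : 0 < L) (hr₀ : 0 < r₀)
    (B : ℝ → ℝ) (hBmeas : Measurable B)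
    (hBlb : ∀ ρ ∈ Set.Ioi r₀, L ^ 2 / ρ ^ 2 ≤ B ρ)
    (hInt : IntegrableOn
      (fun ρ : ℝ => Real.sqrt (B ρ) / (ρ * Real.sqrt ((ρ / r₀) ^ (2 * d - 2) - 1)))
      (Set.Ioi r₀))
    (ℓ : ℝ)
    (hℓ : ℓ = 2 * L * ∫ ρ in Set.Ioi r₀,
      Real.sqrt (B ρ) / (ρ * Real.sqrt ((ρ / r₀) ^ (2 * d - 2) - 1))) :
    (2 * L ^ 2 / r₀) * Real.sqrt Real.pi *
        Real.Gamma ((d : ℝ) / (2 * ((d : ℝ) - 1))) /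
        Real.Gamma (1 / (2 * ((d : ℝ) - 1))) ≤ ℓ ∧
    L ^ 2 / r₀ ≤ (Real.Gamma (1 / (2 * ((d : ℝ) - 1))) /
        (2 * Real.sqrt Real.pi * Real.Gamma ((d : ℝ) / (2 * ((d : ℝ) - 1))))) * ℓ ∧
    ((∀ ρ ∈ Set.Ioi r₀, B ρ = L ^ 2 / ρ ^ 2) →
      ℓ = (2 * L ^ 2 / r₀) * Real.sqrt Real.pi *
        Real.Gamma ((d : ℝ) / (2 * ((d : ℝ) - 1))) /
        Real.Gamma (1 / (2 * ((d : ℝ) - 1)))) ∧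
    (2 * L ^ 2 / ℓ) * Real.sqrt Real.pi *
        Real.Gamma ((d : ℝ) / (2 * ((d : ℝ) - 1))) /
        Real.Gamma (1 / (2 * ((d : ℝ) - 1))) ≤ r₀ :=
  strip_tip_radius_bound_general d hd L r₀ hL hr₀ B hBlb hInt ℓ hℓ
end

section
/- Let q ≥ 0 be an integer and L, r_0 > 0. Let B : (r_0, ∞) → ℝ be measurable with B(r) ≥ L²/r² for all r > r_0, and let h : (r_0, ∞) → ℝ satisfy (r_0/r)^(2q+2) < h(r) ≤ 1 for all r > r_0. Suppose ℛ := L ∫_{r_0}^∞ √(B(r)) / (r · √((r/r_0)^(2q+2) · h(r) − 1)) dr is finite. Then L²/r_0 ≤ [Γ(1/(2(q+1))) / (√π · Γ((q+2)/(2(q+1))))] · ℛ. -/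
/-! The hypotheses `B ≥ L²/r²` and `h ≤ 1` bound the integrand defining `ℛ` from below by
`L / (r² √((r/r₀)^(2q+2) − 1))`, the integrand of pure AdS (`B = L²/r²`, `h = 1`).
The substitution `r = r₀ t^(-1/(2q+2))` turns the pure-AdS integral into the Beta integral
`B(1/(2q+2) + 1/2, 1/2) / ((2q+2) r₀)`, and `Γ(1/2) = √π`, `Γ(a + 1) = a Γ(a)` reduce it
to the Gamma ratio of the statement. -/

open MeasureTheory Set Real

theorem integral_rpow_mul_one_sub_rpow_eq_beta {a b : ℝ} (ha : 0 < a) (hb : 0 < b) :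
    ∫ x in (0 : ℝ)..1, x ^ (a - 1) * (1 - x) ^ (b - 1) = ProbabilityTheory.beta a b := by
  rw [ProbabilityTheory.beta_eq_betaIntegralReal a b ha hb, Complex.betaIntegral,
    intervalIntegral.integral_of_le zero_le_one, intervalIntegral.integral_of_le zero_le_one,
    ← RCLike.re_eq_complex_re, ← integral_re]
  · refine setIntegral_congr_fun measurableSet_Ioc fun x hx => ?_
    rw [← Complex.ofReal_one, ← Complex.ofReal_sub, ← Complex.ofReal_sub,
      ← Complex.ofReal_sub, ← Complex.ofReal_cpow hx.1.le,
      ← Complex.ofReal_cpow (sub_nonneg.2 hx.2),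
      ← Complex.ofReal_mul, RCLike.re_to_complex, Complex.ofReal_re]
  · exact (Complex.betaIntegral_convergent (u := a) (v := b) (by simpa) (by simpa)).1

theorem image_rpow_neg_Ioo_zero_one {a : ℝ} (ha : 0 < a) :
    (fun t : ℝ => t ^ (-a)) '' Ioo 0 1 = Ioi 1 := by
  ext y
  constructor
  · rintro ⟨t, ⟨ht₀, ht₁⟩, rfl⟩
    exact one_lt_rpow_of_pos_of_lt_one_of_neg ht₀ ht₁ (neg_neg_of_pos ha)
  · intro hy
    have hy₀ : 0 < y := one_pos.trans hy
    refine ⟨y ^ (-a⁻¹),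
      ⟨rpow_pos_of_pos hy₀ _, rpow_lt_one_of_one_lt_of_neg hy (by simpa)⟩, ?_⟩
    dsimp only
    rw [← rpow_mul hy₀.le, neg_mul_neg, inv_mul_cancel₀ ha.ne', rpow_one]

theorem abs_deriv_mul_inv_sq_mul_sqrt_rpow_sub_one {p t : ℝ} (hp : 0 < p) (ht₀ : 0 < t)
    (ht₁ : t < 1) :
    |-p⁻¹ * t ^ (-p⁻¹ - 1)| * ((t ^ (-p⁻¹)) ^ 2 * √((t ^ (-p⁻¹)) ^ p - 1))⁻¹
      = p⁻¹ * (t ^ (p⁻¹ + 1 / 2 - 1) * (1 - t) ^ ((1 : ℝ) / 2 - 1)) := by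
  set a := p⁻¹
  have ha : 0 < a := inv_pos.2 hp
  have hpow : (t ^ (-a)) ^ p = t⁻¹ := by
    rw [← rpow_mul ht₀.le, neg_mul, inv_mul_cancel₀ hp.ne', rpow_neg_one]
  have hsq : (t ^ (-a)) ^ 2 = (t ^ (2 * a))⁻¹ := by
    rw [← rpow_natCast, ← rpow_mul ht₀.le, ← rpow_neg ht₀.le]
    ring_nf
  have hsqrt : √(t⁻¹ - 1) = √(1 - t) / √t := by
    rw [← sqrt_div' _ ht₀.le, sub_div, div_self ht₀.ne', one_div]
  have hexp : t ^ (a + 1 / 2 - 1) = t ^ (-a - 1) * t ^ (2 * a) * √t := by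
    rw [sqrt_eq_rpow, ← rpow_add ht₀, ← rpow_add ht₀]
    ring_nf
  have hexp' : (1 - t) ^ ((1 : ℝ) / 2 - 1) = (√(1 - t))⁻¹ := by
    rw [sqrt_eq_rpow, ← rpow_neg (by linarith)]
    norm_num
  have hsqrt_pos : 0 < √(1 - t) := sqrt_pos.2 (by linarith)
  rw [hpow, hsq, hsqrt, hexp, hexp', abs_mul, abs_neg, abs_of_pos ha, abs_of_pos (by positivity)]
  field_simp

theorem integral_Ioi_one_inv_sq_mul_sqrt_rpow_sub_one {p : ℝ} (hp : 0 < p) :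
    ∫ s in Ioi (1 : ℝ), (s ^ 2 * √(s ^ p - 1))⁻¹
      = p⁻¹ * ∫ t in (0 : ℝ)..1,
          t ^ (p⁻¹ + 1 / 2 - 1) * (1 - t) ^ ((1 : ℝ) / 2 - 1) := by
  have ha : 0 < p⁻¹ := inv_pos.2 hp
  rw [← image_rpow_neg_Ioo_zero_one ha,
    integral_image_eq_integral_abs_deriv_smul measurableSet_Ioo
      (fun t ht => (hasDerivAt_rpow_const (Or.inl ht.1.ne')).hasDerivWithinAt)
      ((rpow_left_injOn (neg_ne_zero.2 ha.ne')).mono fun t ht => ht.1.le),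
    intervalIntegral.integral_of_le zero_le_one, integral_Ioc_eq_integral_Ioo,
    ← integral_const_mul]
  exact setIntegral_congr_fun measurableSet_Ioo fun t ht =>
    abs_deriv_mul_inv_sq_mul_sqrt_rpow_sub_one hp ht.1 ht.2

theorem integral_Ioi_inv_sq_mul_sqrt_div_rpow_sub_one {p r₀ : ℝ} (hp : 0 < p)
    (hr₀ : 0 < r₀) :
    ∫ r in Ioi r₀, (r ^ 2 * √((r / r₀) ^ p - 1))⁻¹
      = √π * Gamma (p⁻¹ + 1 / 2) / (r₀ * Gamma p⁻¹) := by
  have ha : 0 < p⁻¹ := inv_pos.2 hp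
  have hscale : ∫ r in Ioi r₀, (r ^ 2 * √((r / r₀) ^ p - 1))⁻¹
      = r₀⁻¹ * ∫ s in Ioi (1 : ℝ), (s ^ 2 * √(s ^ p - 1))⁻¹ := by
    have := integral_comp_mul_left_Ioi (fun r => (r ^ 2 * √((r / r₀) ^ p - 1))⁻¹) 1 hr₀
    rw [mul_one, smul_eq_mul] at this
    rw [← mul_right_inj' (inv_ne_zero hr₀.ne'), ← this, ← mul_assoc, ← integral_const_mul]
    refine setIntegral_congr_fun measurableSet_Ioi fun s _ => ?_
    rw [mul_div_cancel_left₀ _ hr₀.ne']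
    field_simp
  have hbeta : ProbabilityTheory.beta (p⁻¹ + 1 / 2) (1 / 2)
      = √π * Gamma (p⁻¹ + 1 / 2) / (p⁻¹ * Gamma p⁻¹) := by
    rw [ProbabilityTheory.beta, add_assoc, add_halves, Gamma_add_one ha.ne', Gamma_one_half_eq,
      mul_comm]
  rw [hscale, integral_Ioi_one_inv_sq_mul_sqrt_rpow_sub_one hp,
    integral_rpow_mul_one_sub_rpow_eq_beta (by positivity) one_half_pos, hbeta]
  field_simp

theorem mul_inv_sq_mul_sqrt_sub_one_le {L r B P h : ℝ} (hr : 0 < r) (hB : L ^ 2 / r ^ 2 ≤ B)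
    (hP : 0 ≤ P) (hPh : 1 < P * h) (h_le : h ≤ 1) :
    L * (r ^ 2 * √(P - 1))⁻¹ ≤ √B / (r * √(P * h - 1)) := by
  have hLB : L / r ≤ √B := le_sqrt_of_sq_le (by rwa [div_pow])
  have hPh_le : P * h - 1 ≤ P - 1 := by nlinarith
  have hsqrt_pos : 0 < √(P * h - 1) := sqrt_pos.2 (by linarith)
  calc L * (r ^ 2 * √(P - 1))⁻¹ = L / r / (r * √(P - 1)) := by
        rw [div_div, ← mul_assoc, ← sq, div_eq_mul_inv]
    _ ≤ √B / (r * √(P * h - 1)) := by gcongr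

theorem sphere_tip_radius_bound_general
    (q : ℕ) (L r₀ : ℝ) (hL : 0 < L) (hr₀ : 0 < r₀)
    (B h : ℝ → ℝ)
    (hBlb : ∀ r ∈ Set.Ioi r₀, L ^ 2 / r ^ 2 ≤ B r)
    (hh : ∀ r ∈ Set.Ioi r₀, (r₀ / r) ^ (2 * q + 2) < h r ∧ h r ≤ 1)
    (hInt : IntegrableOn
      (fun r : ℝ => Real.sqrt (B r) / (r * Real.sqrt ((r / r₀) ^ (2 * q + 2) * h r - 1)))
      (Set.Ioi r₀))
    (ℛ : ℝ)
    (hℛ : ℛ = L * ∫ r in Set.Ioi r₀,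
      Real.sqrt (B r) / (r * Real.sqrt ((r / r₀) ^ (2 * q + 2) * h r - 1))) :
    L ^ 2 / r₀ ≤ (Real.Gamma (1 / (2 * ((q : ℝ) + 1))) /
      (Real.sqrt Real.pi * Real.Gamma (((q : ℝ) + 2) / (2 * ((q : ℝ) + 1))))) * ℛ := by
  set a : ℝ := 1 / (2 * ((q : ℝ) + 1))
  have hpointwise : ∀ r ∈ Ioi r₀, L * (r ^ 2 * √((r / r₀) ^ (2 * q + 2) - 1))⁻¹
      ≤ √(B r) / (r * √((r / r₀) ^ (2 * q + 2) * h r - 1)) := by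
    intro r hr
    have hP : 0 < (r / r₀) ^ (2 * q + 2) := by have := hr₀.trans hr; positivity
    have hPh := (hh r hr).1
    rw [← inv_div, inv_pow] at hPh
    exact mul_inv_sq_mul_sqrt_sub_one_le (hr₀.trans hr) (hBlb r hr) hP.le
      ((inv_lt_iff_one_lt_mul₀' hP).1 hPh) (hh r hr).2
  have hcompare := integral_mono_of_nonneg
    (ae_of_all _ fun r => mul_nonneg hL.le (inv_nonneg.2 (by positivity))) hInt
    ((ae_restrict_iff' measurableSet_Ioi).2 (ae_of_all _ hpointwise))
  have hAdS : ∫ r in Ioi r₀, L * (r ^ 2 * √((r / r₀) ^ (2 * q + 2) - 1))⁻¹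
      = L * (√π * Gamma (a + 1 / 2) / (r₀ * Gamma a)) := by
    have := integral_Ioi_inv_sq_mul_sqrt_div_rpow_sub_one (p := ((2 * q + 2 : ℕ) : ℝ))
      (by positivity) hr₀
    simp only [rpow_natCast] at this
    rw [integral_const_mul, this, show ((2 * q + 2 : ℕ) : ℝ)⁻¹ = a by push_cast; ring]
  have hΓ : 0 < Gamma a := Gamma_pos_of_pos (by positivity)
  have hΓ_half : 0 < Gamma (a + 1 / 2) := Gamma_pos_of_pos (by positivity)
  rw [show ((q : ℝ) + 2) / (2 * ((q : ℝ) + 1)) = a + 1 / 2 by simp only [a]; field_simp; ring]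
  calc L ^ 2 / r₀
      = Gamma a / (√π * Gamma (a + 1 / 2))
          * (L * (L * (√π * Gamma (a + 1 / 2) / (r₀ * Gamma a)))) := by
        generalize Gamma (a + 1 / 2) = G at hΓ_half ⊢
        field_simp
    _ ≤ Gamma a / (√π * Gamma (a + 1 / 2)) * ℛ := by
        rw [hℛ, ← hAdS]
        gcongr

/-- Tip-radius bound for a `(q+1)`-dimensional extremal surface anchored at a
boundary sphere of radius `ℛ = L ∫_{r₀}^∞ √B(r)/(r √((r/r₀)^(2q+2) h(r) − 1)) dr`,
assuming `B(r) ≥ L²/r²` and `(r₀/r)^(2q+2) < h(r) ≤ 1`. -/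
theorem sphere_tip_radius_bound
    (q : ℕ) (L r₀ : ℝ) (hL : 0 < L) (hr₀ : 0 < r₀)
    (B h : ℝ → ℝ) (hBmeas : Measurable B)
    (hBlb : ∀ r ∈ Set.Ioi r₀, L ^ 2 / r ^ 2 ≤ B r)
    (hh : ∀ r ∈ Set.Ioi r₀, (r₀ / r) ^ (2 * q + 2) < h r ∧ h r ≤ 1)
    (hInt : IntegrableOn
      (fun r : ℝ => Real.sqrt (B r) / (r * Real.sqrt ((r / r₀) ^ (2 * q + 2) * h r - 1)))
      (Set.Ioi r₀))
    (ℛ : ℝ)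
    (hℛ : ℛ = L * ∫ r in Set.Ioi r₀,
      Real.sqrt (B r) / (r * Real.sqrt ((r / r₀) ^ (2 * q + 2) * h r - 1))) :
    L ^ 2 / r₀ ≤ (Real.Gamma (1 / (2 * ((q : ℝ) + 1))) /
      (Real.sqrt Real.pi * Real.Gamma (((q : ℝ) + 2) / (2 * ((q : ℝ) + 1))))) * ℛ :=
  sphere_tip_radius_bound_general q L r₀ hL hr₀ B h hBlb hh hInt ℛ hℛ
end

section
/- Let d ≥ 2 be an integer, r_0 > 0, and let J : [r_0, ∞) → ℝ be continuous. For r > r_0 define K(r) = −(r² / ((d−1) · √((r/r_0)^(2d−2) − 1))) · ∫_{r_0}^r J(ρ) · √((ρ/r_0)^(2d−2) − 1) dρ. Then K is differentiable on (r_0, ∞) and satisfies K'(r) + (K(r)/r) · h₂(r) = −(r²/(d−1)) · J(r) for all r > r_0, where h₂(r) = ((d−3)·(r/r_0)^(2d−2) + 2) / ((r/r_0)^(2d−2) − 1). -/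
open MeasureTheory Topology

/-!
The integrating factor of the momentum constraint is `w(r) / r²` with
`w(r) = √((r/r₀)^(2d-2) - 1)`: differentiating `K · w / r² = -(1/(d-1)) ∫ J w` gives
`K' + K (w'/w - 2/r) = -(r²/(d-1)) J`, and `r w'/w - 2` is exactly `h₂`, since
`r w'/w = (d-1) (r/r₀)^(2d-2) / ((r/r₀)^(2d-2) - 1)`.
-/

theorem hasDerivAt_integral_of_continuousOn_Ici {f : ℝ → ℝ} {a r : ℝ}
    (hf : ContinuousOn f (Set.Ici a)) (hr : a < r) :
    HasDerivAt (fun x => ∫ ρ in a..x, f ρ) (f r) r := by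
  have hint : IntervalIntegrable f volume a r :=
    (hf.mono (by rw [Set.uIcc_of_le hr.le]; exact Set.Icc_subset_Ici_self)).intervalIntegrable
  have hmeas : StronglyMeasurableAtFilter f (𝓝 r) volume :=
    (hf.mono Set.Ioi_subset_Ici_self).stronglyMeasurableAtFilter isOpen_Ioi r hr
  exact intervalIntegral.integral_hasDerivAt_right hint hmeas (hf.continuousAt (Ici_mem_nhds hr))

theorem deriv_add_mul_eq_of_integratingFactor {w I J K : ℝ → ℝ} {w' c r : ℝ}
    (hw : HasDerivAt w w' r) (hI : HasDerivAt I (J r * w r) r)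
    (hwr : w r ≠ 0) (hc : c ≠ 0)
    (hK : ∀ x, K x = -(x ^ 2 / (c * w x)) * I x) :
    DifferentiableAt ℝ K r ∧
      deriv K r + (K r / r) * (r * w' / w r - 2) = -(r ^ 2 / c) * J r := by
  obtain rfl : K = fun x => -(x ^ 2 / (c * w x)) * I x := funext hK
  have hK' :=
    (((hasDerivAt_pow 2 r).fun_div (hw.const_mul c) (mul_ne_zero hc hwr)).fun_neg).fun_mul hI
  refine ⟨hK'.differentiableAt, ?_⟩
  rw [hK'.deriv]
  field_simp
  ring

theorem hasDerivAt_sqrt_div_pow_sub_one {n : ℕ} {r₀ r : ℝ} (hn : n ≠ 0) (hr₀ : 0 < r₀)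
    (hr : r₀ < r) :
    HasDerivAt (fun x => Real.sqrt ((x / r₀) ^ n - 1))
      (n * (r / r₀) ^ n / (2 * r * ((r / r₀) ^ n - 1)) * Real.sqrt ((r / r₀) ^ n - 1)) r := by
  have hp : 0 < (r / r₀) ^ n - 1 :=
    sub_pos.mpr (one_lt_pow₀ ((one_lt_div hr₀).mpr hr) hn)
  have hpow : (r / r₀) ^ n = (r / r₀) ^ (n - 1) * (r / r₀) := by
    rw [← pow_succ, Nat.sub_add_cancel (Nat.one_le_iff_ne_zero.mpr hn)]
  convert ((((hasDerivAt_id' r).div_const r₀).fun_pow n).sub_const 1).sqrt hp.ne' using 1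
  have hs := Real.sq_sqrt hp.le
  have hs₀ := Real.sqrt_pos.mpr hp
  have hr_ne : r ≠ 0 := (hr₀.trans hr).ne'
  generalize Real.sqrt ((r / r₀) ^ n - 1) = s at hs hs₀ ⊢
  rw [← hs, hpow]
  field_simp

/-- The function
`K(r) = −(r²/((d−1)√((r/r₀)^(2d−2) − 1))) ∫_{r₀}^r J(ρ)√((ρ/r₀)^(2d−2) − 1) dρ`
solves the momentum constraint `K' + (K/r) h₂ = −(r²/(d−1)) J` on `(r₀, ∞)`,
where `h₂(r) = ((d−3)(r/r₀)^(2d−2) + 2)/((r/r₀)^(2d−2) − 1)`. -/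
theorem momentum_constraint_strip_solution
    (d : ℕ) (hd : 2 ≤ d) (r₀ : ℝ) (hr₀ : 0 < r₀)
    (J : ℝ → ℝ) (hJ : ContinuousOn J (Set.Ici r₀))
    (K : ℝ → ℝ)
    (hK : ∀ r, K r =
      -(r ^ 2 / (((d : ℝ) - 1) * Real.sqrt ((r / r₀) ^ (2 * d - 2) - 1))) *
        ∫ ρ in r₀..r, J ρ * Real.sqrt ((ρ / r₀) ^ (2 * d - 2) - 1)) :
    ∀ r ∈ Set.Ioi r₀,
      DifferentiableAt ℝ K r ∧
      deriv K r + (K r / r) *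
          ((((d : ℝ) - 3) * (r / r₀) ^ (2 * d - 2) + 2) /
            ((r / r₀) ^ (2 * d - 2) - 1)) =
        -(r ^ 2 / ((d : ℝ) - 1)) * J r := by
  intro r (hr : r₀ < r)
  have hn : 2 * d - 2 ≠ 0 := by omega
  have hp : 0 < (r / r₀) ^ (2 * d - 2) - 1 :=
    sub_pos.mpr (one_lt_pow₀ ((one_lt_div hr₀).mpr hr) hn)
  have hd₁ : (d : ℝ) - 1 ≠ 0 := by
    have : (2 : ℝ) ≤ d := by exact_mod_cast hd
    linarith
  have hw : Continuous fun ρ => Real.sqrt ((ρ / r₀) ^ (2 * d - 2) - 1) := by fun_prop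
  have hI := hasDerivAt_integral_of_continuousOn_Ici (hJ.mul hw.continuousOn) hr
  have hsol := deriv_add_mul_eq_of_integratingFactor (hasDerivAt_sqrt_div_pow_sub_one hn hr₀ hr)
    hI (Real.sqrt_pos.mpr hp).ne' hd₁ hK
  convert hsol using 4
  have hr_ne : r ≠ 0 := (hr₀.trans hr).ne'
  rw [Nat.cast_sub (by omega)]
  field_simp
  push_cast
  ring
end

section
/- Let d ≥ 2 be an integer, r_0 > 0, and let J : [r_0, ∞) → ℝ be continuous with ∫_{r_0}^∞ |J(ρ)| · √(ρ^(2d−2) − r_0^(2d−2)) dρ < ∞. Define K(r) = −(r² / ((d−1) · √((r/r_0)^(2d−2) − 1))) · ∫_{r_0}^r J(ρ) · √((ρ/r_0)^(2d−2) − 1) dρ for r > r_0. Then lim_{r→∞} r^(d−3) · K(r) exists and equals −(1/(d−1)) · ∫_{r_0}^∞ J(ρ) · √(ρ^(2d−2) − r_0^(2d−2)) dρ. -/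
/-!
Write `d = n + 1` and `h ρ = J ρ √(ρ^(2n) - r₀^(2n))`. Since
`√((ρ/r₀)^(2n) - 1) = √(ρ^(2n) - r₀^(2n)) / r₀^n`, the powers of `r₀` cancel and
`r^(d-3) K(r) = -(1/n) · r^n / √(r^(2n) - r₀^(2n)) · ∫_{r₀}^r h`.
The prefactor `r^n / √(r^(2n) - r₀^(2n)) = (1 - (r₀/r)^(2n))^(-1/2)` tends to `1`, and the
integral tends to `∫_{r₀}^∞ h` because `h` is integrable on `(r₀, ∞)`.
-/

open MeasureTheory Filter Topology Set

lemma sqrt_div_pow_sub_one {a : ℝ} (ha : 0 < a) (n : ℕ) (x : ℝ) :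
    √((x / a) ^ (2 * n) - 1) = √(x ^ (2 * n) - a ^ (2 * n)) / a ^ n := by
  have hsplit : (x / a) ^ (2 * n) - 1 = (x ^ (2 * n) - a ^ (2 * n)) / a ^ (2 * n) := by
    rw [sub_div, div_pow, div_self (by positivity)]
  rw [hsplit, Real.sqrt_div' _ (by positivity), pow_mul' a, Real.sqrt_sq (by positivity)]

lemma tendsto_pow_div_sqrt_pow_sub_pow {n : ℕ} (hn : n ≠ 0) (a : ℝ) :
    Tendsto (fun r : ℝ => r ^ n / √(r ^ (2 * n) - a ^ (2 * n))) atTop (𝓝 1) := by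
  have hratio : Tendsto (fun r : ℝ => (a / r) ^ (2 * n)) atTop (𝓝 0) := by
    simpa [hn] using ((tendsto_const_nhds (x := a)).div_atTop tendsto_id).pow (2 * n)
  have hinv : Tendsto (fun r : ℝ => (√(1 - (a / r) ^ (2 * n)))⁻¹) atTop (𝓝 1) := by
    simpa using ((tendsto_const_nhds.sub hratio).sqrt).inv₀ (by norm_num : √(1 - 0 : ℝ) ≠ 0)
  refine hinv.congr' ?_
  filter_upwards [eventually_gt_atTop 0] with r hr
  have hfactor : r ^ (2 * n) - a ^ (2 * n) = (r ^ n) ^ 2 * (1 - (a / r) ^ (2 * n)) := by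
    rw [mul_sub, mul_one, div_pow, ← pow_mul, mul_comm n 2,
      mul_div_cancel₀ _ (by positivity)]
  rw [hfactor, Real.sqrt_mul (by positivity), Real.sqrt_sq (by positivity),
    div_mul_cancel_left₀ (by positivity)]

lemma integral_mul_sqrt_div_pow_sub_one {a : ℝ} (ha : 0 < a) (n : ℕ) (f : ℝ → ℝ) (b c : ℝ) :
    ∫ ρ in b..c, f ρ * √((ρ / a) ^ (2 * n) - 1) =
      (∫ ρ in b..c, f ρ * √(ρ ^ (2 * n) - a ^ (2 * n))) / a ^ n := by
  simp only [sqrt_div_pow_sub_one ha, ← mul_div_assoc, intervalIntegral.integral_div]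

/-- Asymptotics of the momentum-constraint solution:
`lim_{r→∞} r^(d−3) K(r) = −(1/(d−1)) ∫_{r₀}^∞ J(ρ)√(ρ^(2d−2) − r₀^(2d−2)) dρ`. -/
theorem momentum_entanglement_limit
    (d : ℕ) (hd : 2 ≤ d) (r₀ : ℝ) (hr₀ : 0 < r₀)
    (J : ℝ → ℝ) (hJ : ContinuousOn J (Set.Ici r₀))
    (hInt : IntegrableOn
      (fun ρ : ℝ => |J ρ| * Real.sqrt (ρ ^ (2 * d - 2) - r₀ ^ (2 * d - 2)))
      (Set.Ioi r₀))
    (K : ℝ → ℝ)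
    (hK : ∀ r, K r =
      -(r ^ 2 / (((d : ℝ) - 1) * Real.sqrt ((r / r₀) ^ (2 * d - 2) - 1))) *
        ∫ ρ in r₀..r, J ρ * Real.sqrt ((ρ / r₀) ^ (2 * d - 2) - 1)) :
    Filter.Tendsto (fun r : ℝ => r ^ ((d : ℝ) - 3) * K r) Filter.atTop
      (nhds (-(1 / ((d : ℝ) - 1)) *
        ∫ ρ in Set.Ioi r₀, J ρ * Real.sqrt (ρ ^ (2 * d - 2) - r₀ ^ (2 * d - 2)))) := by
  obtain ⟨n, rfl⟩ : ∃ n, d = n + 1 := ⟨d - 1, by omega⟩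
  have hn : n ≠ 0 := by omega
  rw [show 2 * (n + 1) - 2 = 2 * n by omega] at hInt hK ⊢
  push_cast at hK ⊢
  simp only [add_sub_cancel_right] at hK ⊢
  set h := fun ρ : ℝ => J ρ * √(ρ ^ (2 * n) - r₀ ^ (2 * n))
  have hh : IntegrableOn h (Ioi r₀) := by
    have hmeas : AEStronglyMeasurable h (volume.restrict (Ioi r₀)) :=
      ((hJ.mono Ioi_subset_Ici_self).mul (by fun_prop)).aestronglyMeasurable measurableSet_Ioi
    refine (integrable_norm_iff hmeas).mp ?_
    simpa only [h, norm_mul, Real.norm_eq_abs, abs_of_nonneg (Real.sqrt_nonneg _)]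
      using hInt.integrable
  have hlim := (tendsto_pow_div_sqrt_pow_sub_pow hn r₀).mul
    ((intervalIntegral_tendsto_integral_Ioi r₀ hh tendsto_id).const_mul (-(1 / (n : ℝ))))
  rw [one_mul] at hlim
  refine hlim.congr' ?_
  filter_upwards [eventually_gt_atTop 0] with r hr
  have hpow : r ^ ((n : ℝ) + 1 - 3) * r ^ 2 = r ^ n := by
    rw [← Real.rpow_natCast r 2, ← Real.rpow_add hr, ← Real.rpow_natCast]
    ring_nf
  rw [hK, integral_mul_sqrt_div_pow_sub_one hr₀, sqrt_div_pow_sub_one hr₀]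
  field_simp
  rw [hpow, id]
end

section
/- Let d ≥ 2 and q ≥ 0 be integers, and let r̂, ω, W, n be real numbers with r̂ > 1, 0 ≤ ω ≤ r̂^d, 0 < W ≤ √(r̂^(2q+2) − 1) · √(1 − ω/r̂^d), and 1 ≤ n ≤ d/(q+1). Then W^n ≤ ω + r̂^d · W · √(1 − ω/r̂^d) / √(r̂^(2q+2) − 1). -/
/-- Thin-shell inequality `W^n ≤ ω + r̂^d W √(1 − ω/r̂^d)/√(r̂^(2q+2) − 1)`
under the dominant-energy-condition constraints, for `1 ≤ n ≤ d/(q+1)`. -/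
theorem thin_shell_Wn_bound
    (d q : ℕ) (hd : 2 ≤ d) (rh ω W n : ℝ)
    (hr : 1 < rh) (hω0 : 0 ≤ ω) (hωM : ω ≤ rh ^ d)
    (hW0 : 0 < W)
    (hW : W ≤ Real.sqrt (rh ^ (2 * q + 2) - 1) * Real.sqrt (1 - ω / rh ^ d))
    (hn1 : 1 ≤ n) (hn2 : n ≤ (d : ℝ) / ((q : ℝ) + 1)) :
    W ^ n ≤ ω + rh ^ d * W * Real.sqrt (1 - ω / rh ^ d) /
      Real.sqrt (rh ^ (2 * q + 2) - 1) := by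
  set s := Real.sqrt (rh ^ (2 * q + 2) - 1) with hs
  set t := Real.sqrt (1 - ω / rh ^ d) with ht
  have hr0 : (0:ℝ) < rh := lt_trans one_pos hr
  have hrd : (0:ℝ) < rh ^ d := pow_pos hr0 d
  have h1 : (1:ℝ) < rh ^ (2 * q + 2) := one_lt_pow₀ hr (by omega)
  have hs0 : 0 < s := Real.sqrt_pos.2 (by linarith)
  have ht0 : 0 ≤ t := Real.sqrt_nonneg _
  have hA : 0 < s * t := lt_of_lt_of_le hW0 hW
  have htpos : 0 < t := by
    rcases ht0.lt_or_eq with h | h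
    · exact h
    · exfalso; rw [← h, mul_zero] at hA; exact lt_irrefl 0 hA
  have hinner : (0:ℝ) ≤ 1 - ω / rh ^ d := by
    have : ω / rh ^ d ≤ 1 := (div_le_one hrd).2 hωM
    linarith
  have ht2 : t ^ 2 = 1 - ω / rh ^ d := Real.sq_sqrt hinner
  have ht1 : t ≤ 1 := by
    rw [ht]
    have h0 : 0 ≤ ω / rh ^ d := div_nonneg hω0 hrd.le
    calc Real.sqrt (1 - ω / rh ^ d) ≤ Real.sqrt 1 := Real.sqrt_le_sqrt (by linarith)
      _ = 1 := Real.sqrt_one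
  have hst : s * t ≤ rh ^ (q + 1) := by
    have h2 : s ≤ rh ^ (q + 1) := by
      rw [hs]
      have : rh ^ (2 * q + 2) - 1 ≤ (rh ^ (q + 1)) ^ 2 := by
        rw [← pow_mul]; ring_nf; linarith
      calc Real.sqrt (rh ^ (2 * q + 2) - 1) ≤ Real.sqrt ((rh ^ (q + 1)) ^ 2) :=
            Real.sqrt_le_sqrt this
        _ = rh ^ (q + 1) := Real.sqrt_sq (pow_pos hr0 _).le
    calc s * t ≤ s * 1 := mul_le_mul_of_nonneg_left ht1 hs0.le
      _ = s := mul_one s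
      _ ≤ rh ^ (q + 1) := h2
  have hlam1 : W / (s * t) ≤ 1 := (div_le_one hA).2 hW
  have hlam0 : 0 < W / (s * t) := div_pos hW0 hA
  have step1 : W ^ n ≤ (W / (s * t)) * (s * t) ^ n := by
    have e1 : W = (W / (s * t)) * (s * t) := by field_simp
    calc W ^ n = (W / (s * t)) ^ n * (s * t) ^ n := by
          rw [← Real.mul_rpow hlam0.le hA.le, ← e1]
      _ ≤ (W / (s * t)) * (s * t) ^ n := by
          apply mul_le_mul_of_nonneg_right _ (Real.rpow_nonneg hA.le n)
          calc (W / (s * t)) ^ n ≤ (W / (s * t)) ^ (1:ℝ) :=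
                Real.rpow_le_rpow_of_exponent_ge hlam0 hlam1 hn1
            _ = W / (s * t) := Real.rpow_one _
  have step2 : (s * t) ^ n ≤ rh ^ d := by
    have hqn : ((q : ℝ) + 1) * n ≤ (d : ℝ) := by
      have hq1 : (0:ℝ) < (q : ℝ) + 1 := by positivity
      have := (le_div_iff₀ hq1).1 hn2
      linarith
    calc (s * t) ^ n ≤ (rh ^ (q + 1)) ^ n :=
          Real.rpow_le_rpow hA.le hst (le_trans zero_le_one hn1)
      _ = rh ^ (((q : ℝ) + 1) * n) := by
          rw [← Real.rpow_natCast rh (q + 1), ← Real.rpow_mul hr0.le]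
          push_cast; ring_nf
      _ ≤ rh ^ ((d : ℕ) : ℝ) := Real.rpow_le_rpow_of_exponent_le hr.le (by push_cast; linarith)
      _ = rh ^ d := Real.rpow_natCast rh d
  have step3 : (W / (s * t)) * rh ^ d ≤ ω + rh ^ d * W * t / s := by
    have hkey : rh ^ d * W * t / s = W * (rh ^ d - ω) / (s * t) := by
      have hrdt : rh ^ d * t ^ 2 = rh ^ d - ω := by
        rw [ht2]; field_simp
      rw [div_eq_div_iff hs0.ne' hA.ne']
      linear_combination (W * s) * hrdt
    rw [hkey, div_mul_eq_mul_div, div_le_iff₀ hA, add_mul,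
      div_mul_cancel₀ _ hA.ne']
    have hωW : ω * W ≤ ω * (s * t) := mul_le_mul_of_nonneg_left hW hω0
    nlinarith
  calc W ^ n ≤ (W / (s * t)) * (s * t) ^ n := step1
    _ ≤ (W / (s * t)) * rh ^ d :=
        mul_le_mul_of_nonneg_left step2 hlam0.le
    _ ≤ ω + rh ^ d * W * t / s := step3
end

section
/- Let d ≥ 2 and q with 0 ≤ q ≤ d−2 be integers, and let r̂, ω, W be real numbers with r̂ > 1, 0 ≤ ω ≤ r̂^d, and 0 < W ≤ √(r̂^(2q+2) − 1) · √(1 − ω/r̂^d). Then W ≤ α_{d,q} · (ω + r̂^d · W · √(1 − ω/r̂^d) / √(r̂^(2q+2) − 1)), where α_{d,q} = √((q+1)/d) · (d/(d−1−q))^((q+1−d)/(2(q+1))). -/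
/-! With `p = d / (q + 1)` and `y = r̂ ^ (2q + 2)`, the square of the constant is
`α² = p⁻¹ (p / (p - 1)) ^ (1 - p)`, the best constant in `y - 1 ≤ α² y ^ p` (a rescaled
Bernoulli inequality), so `√(r̂ ^ (2q + 2) - 1) ≤ α r̂ ^ d`. Writing `ω = r̂ ^ d (1 - s²)`, the
claimed bound is affine in `W`, and it holds at both ends `W = 0` and
`W = √(r̂ ^ (2q + 2) - 1) s` of the allowed range. -/

open Real

noncomputable def thinShellConstant (d q : ℕ) : ℝ :=
  √(((q : ℝ) + 1) / d) * ((d : ℝ) / (d - 1 - q)) ^ (((q : ℝ) + 1 - d) / (2 * ((q : ℝ) + 1)))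

lemma sub_one_le_inv_mul_rpow {p y : ℝ} (hp : 1 < p) (hy : 0 ≤ y) :
    y - 1 ≤ p⁻¹ * (p / (p - 1)) ^ (1 - p) * y ^ p := by
  set c := p / (p - 1) with hc_def
  have hp₀ : 0 < p := by linarith
  have hc : 0 < c := div_pos hp₀ (by linarith)
  -- with this `c`, the tangent line of the right-hand side at `y = c` is `y - 1`
  have bernoulli : 1 + p * (y / c - 1) ≤ y ^ p / c ^ p := by
    have h := one_add_mul_self_le_rpow_one_add (s := y / c - 1)
      (by linarith [div_nonneg hy hc.le]) hp.le
    rwa [add_sub_cancel, div_rpow hy hc.le] at h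
  calc y - 1 = p⁻¹ * c * (1 + p * (y / c - 1)) := by
        rw [hc_def]; field_simp [(by linarith : p - 1 ≠ 0)]; ring
    _ ≤ p⁻¹ * c * (y ^ p / c ^ p) := by gcongr
    _ = p⁻¹ * c ^ (1 - p) * y ^ p := by
        rw [rpow_sub hc, rpow_one]; field_simp

lemma sqrt_sub_one_le_mul_rpow {p y : ℝ} (hp : 1 < p) (hy : 0 ≤ y) :
    √(y - 1) ≤ √p⁻¹ * (p / (p - 1)) ^ ((1 - p) / 2) * y ^ (p / 2) := by
  have hc : 0 < p / (p - 1) := div_pos (by linarith) (by linarith)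
  rw [sqrt_le_left (by positivity), mul_pow, mul_pow, sq_sqrt (by positivity),
    ← rpow_mul_natCast hc.le, ← rpow_mul_natCast hy]
  push_cast
  rw [div_mul_cancel₀ _ two_ne_zero, div_mul_cancel₀ _ two_ne_zero]
  exact sub_one_le_inv_mul_rpow hp hy

lemma sqrt_pow_sub_one_le_mul_pow {d q : ℕ} (hqd : q + 2 ≤ d) {r : ℝ} (hr : 0 ≤ r) :
    √(r ^ (2 * q + 2) - 1) ≤ thinShellConstant d q * r ^ d := by
  have hqd' : (q : ℝ) + 2 ≤ d := by exact_mod_cast hqd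
  have hq : (0 : ℝ) < q + 1 := by positivity
  have hp : 1 < (d : ℝ) / (q + 1) := by rw [one_lt_div hq]; linarith
  rw [thinShellConstant]
  convert sqrt_sub_one_le_mul_rpow hp (pow_nonneg hr (2 * q + 2)) using 3
  · rw [inv_div]
  · congr 1
    · have : (d : ℝ) - 1 - q ≠ 0 := by linarith
      field_simp [this, (by linarith : (d : ℝ) - (q + 1) ≠ 0)]
      ring
    · field_simp
  · rw [← rpow_natCast r (2 * q + 2), ← rpow_mul hr, ← rpow_natCast r d]
    congr 1
    push_cast; field_simp

lemma le_mul_one_sub_sq_add_div {A B s W : ℝ} (hA : 0 ≤ A) (hAB : A ≤ B) (hs₀ : 0 ≤ s)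
    (hs₁ : s ≤ 1) (hW₀ : 0 < W) (hW : W ≤ A * s) :
    W ≤ B * (1 - s ^ 2) + B * s * W / A := by
  have hAs : 0 < A * s := hW₀.trans_le hW
  have hA₀ : 0 < A := pos_of_mul_pos_left hAs hs₀
  have hs : 0 < s := pos_of_mul_pos_right hAs hA
  -- the gap is affine in `W`: `B * (1 - s ^ 2) ≥ 0` at `W = 0` and `B - A * s ≥ 0` at `W = A * s`
  have gap : B * (1 - s ^ 2) + B * s * W / A - W
      = ((A * s - W) * B * (1 - s ^ 2) + W * (B - A * s)) / (A * s) := by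
    field_simp; ring
  have hAsB : A * s ≤ B := (mul_le_of_le_one_right hA hs₁).trans hAB
  have hs2 : 0 ≤ 1 - s ^ 2 := by nlinarith
  rw [← sub_nonneg, gap]
  apply div_nonneg _ hAs.le
  apply add_nonneg
  · exact mul_nonneg (mul_nonneg (by linarith) (by linarith)) hs2
  · exact mul_nonneg hW₀.le (by linarith)

/-- Thin-shell linear-in-mass inequality
`W ≤ α_{d,q} (ω + r̂^d W √(1 − ω/r̂^d)/√(r̂^(2q+2) − 1))` with
`α_{d,q} = √((q+1)/d) (d/(d−1−q))^((q+1−d)/(2(q+1)))`, for `0 ≤ q ≤ d−2`. -/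
theorem thin_shell_W_linear_bound
    (d q : ℕ) (hd : 2 ≤ d) (hq : q ≤ d - 2) (rh ω W : ℝ)
    (hr : 1 < rh) (hω0 : 0 ≤ ω) (hωM : ω ≤ rh ^ d)
    (hW0 : 0 < W)
    (hW : W ≤ Real.sqrt (rh ^ (2 * q + 2) - 1) * Real.sqrt (1 - ω / rh ^ d)) :
    W ≤ (Real.sqrt (((q : ℝ) + 1) / (d : ℝ)) *
        ((d : ℝ) / ((d : ℝ) - 1 - (q : ℝ))) ^
          (((q : ℝ) + 1 - (d : ℝ)) / (2 * ((q : ℝ) + 1)))) *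
      (ω + rh ^ d * W * Real.sqrt (1 - ω / rh ^ d) /
        Real.sqrt (rh ^ (2 * q + 2) - 1)) := by
  show W ≤ thinShellConstant d q * _
  have hM : 0 < rh ^ d := by positivity
  have hshell := sqrt_pow_sub_one_le_mul_pow (q := q) (d := d) (by omega) (zero_le_one.trans hr.le)
  set α := thinShellConstant d q
  set s := √(1 - ω / rh ^ d)
  have hω : ω = rh ^ d * (1 - s ^ 2) := by
    rw [sq_sqrt (by rw [sub_nonneg, div_le_one hM]; exact hωM)]; field_simp; ring
  have hs₁ : s ≤ 1 := sqrt_le_one.mpr (by linarith [div_nonneg hω0 hM.le])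
  calc W ≤ α * rh ^ d * (1 - s ^ 2) + α * rh ^ d * s * W / √(rh ^ (2 * q + 2) - 1) :=
        le_mul_one_sub_sq_add_div (sqrt_nonneg _) hshell (sqrt_nonneg _) hs₁ hW0 hW
    _ = α * (ω + rh ^ d * W * s / √(rh ^ (2 * q + 2) - 1)) := by rw [hω]; ring
end

section
/- Let d ≥ 2 be an integer, and let r̂, ω, W, n be real numbers with r̂ > 1, 0 ≤ ω ≤ r̂^d, 0 < W ≤ √(r̂^(2d−2) − 1) · √(1 − ω/r̂^d), and 1 ≤ n ≤ d/(d−1). Then: (i) W^n ≤ ω + r̂^d · W · √(1 − ω/r̂^d) / √(r̂^(2d−2) − 1); and (ii) W ≤ √((d−1)/d^(d/(d−1))) · (ω + r̂^d · W · √(1 − ω/r̂^d) / √(r̂^(2d−2) − 1)). -/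
/-!
Write `R = r̂^d`, `A = √(r̂^(2d-2) - 1)`, `s = √(1 - ω/R)` and `W = t A s` with `0 < t ≤ 1`.
Since `ω = R (1 - s²)`, the bracketed mass is `M = R t + ω (1 - t) ≥ R t`.
(i) `W^n = t^n (A s)^n ≤ t R ≤ M`, because `A s ≤ r̂^(d-1)` and `(d-1) n ≤ d`.
(ii) `A s ≤ A ≤ √c R` with `c = (d-1)/d^(d/(d-1))`: this is `y - y^d ≤ c` at `y = r̂⁻²`,
and `c` is the maximum of `y - y^d` on `y ≥ 0`. Hence `W = R t · (A s / R) ≤ √c M`.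
-/

open Real

lemma sub_rpow_le_of_one_lt {p y : ℝ} (hp : 1 < p) (hy : 0 ≤ y) :
    y - y ^ p ≤ (p - 1) / p ^ (p / (p - 1)) := by
  have hp0 : 0 < p := by linarith
  have hp1 : 0 < p - 1 := by linarith
  -- Young's inequality with `a = y p^(1/p)`, `b = p^(-1/p)`, chosen so that `ab = y`, `a^p/p = y^p`
  have young := young_inequality_of_nonneg (a := y * p ^ p⁻¹) (b := p ^ (-p⁻¹))
    (by positivity) (by positivity) (HolderConjugate.conjExponent hp)
  have hab : y * p ^ p⁻¹ * p ^ (-p⁻¹) = y := by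
    rw [mul_assoc, ← rpow_add hp0, add_neg_cancel, rpow_zero, mul_one]
  have ha : (y * p ^ p⁻¹) ^ p / p = y ^ p := by
    rw [mul_rpow hy (by positivity), ← rpow_mul hp0.le, inv_mul_cancel₀ hp0.ne', rpow_one,
      mul_div_cancel_right₀ _ hp0.ne']
  have hb : (p ^ (-p⁻¹)) ^ conjExponent p / conjExponent p = (p - 1) / p ^ (p / (p - 1)) := by
    have hexp : p / (p - 1) = 1 + 1 / (p - 1) := by field_simp; ring
    rw [conjExponent, ← rpow_mul hp0.le, hexp, rpow_add hp0, rpow_one]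
    have : -p⁻¹ * (1 + 1 / (p - 1)) = -(1 / (p - 1)) := by field_simp; ring
    rw [this, rpow_neg hp0.le]
    field_simp
    ring
  linarith

lemma pow_two_mul_sub_two_sub_one_le {d : ℕ} (hd : 2 ≤ d) {r : ℝ} (hr : r ≠ 0) :
    r ^ (2 * d - 2) - 1 ≤ ((d : ℝ) - 1) / (d : ℝ) ^ ((d : ℝ) / ((d : ℝ) - 1)) * (r ^ d) ^ 2 := by
  have hd1 : (1 : ℝ) < d := by exact_mod_cast hd
  have h := sub_rpow_le_of_one_lt hd1 (sq_nonneg r⁻¹)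
  rw [rpow_natCast] at h
  have := mul_le_mul_of_nonneg_right h (sq_nonneg (r ^ d))
  have e : (r⁻¹ ^ 2 - (r⁻¹ ^ 2) ^ d) * (r ^ d) ^ 2 = r ^ (2 * d - 2) - 1 := by
    obtain ⟨k, rfl⟩ : ∃ k, d = k + 1 := ⟨d - 1, by omega⟩
    rw [show 2 * (k + 1) - 2 = 2 * k by omega, inv_pow, inv_pow]
    field_simp
    ring
  linarith

lemma rpow_le_rpow_of_le_rpow {x r a b n : ℝ} (hx : 0 ≤ x) (hr : 1 ≤ r) (hxr : x ≤ r ^ a)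
    (hn : 0 ≤ n) (hab : a * n ≤ b) : x ^ n ≤ r ^ b :=
  calc x ^ n ≤ (r ^ a) ^ n := rpow_le_rpow hx hxr hn
    _ = r ^ (a * n) := (rpow_mul (by linarith) a n).symm
    _ ≤ r ^ b := rpow_le_rpow_of_exponent_le hr hab

lemma sqrt_pow_two_mul_sub_two_sub_one_le_pow {r : ℝ} (hr : 0 ≤ r) (d : ℕ) :
    √(r ^ (2 * d - 2) - 1) ≤ r ^ (d - 1) := by
  rw [show 2 * d - 2 = (d - 1) * 2 by omega, pow_mul]
  exact sqrt_le_iff.2 ⟨by positivity, by linarith⟩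

/-- Thin-shell inequalities for strip HRT surfaces (the case `q = d−2`):
(i) `W^n ≤ ω + r̂^d W √(1 − ω/r̂^d)/√(r̂^(2d−2) − 1)` for `1 ≤ n ≤ d/(d−1)`, and
(ii) `W ≤ √((d−1)/d^(d/(d−1))) (ω + r̂^d W √(1 − ω/r̂^d)/√(r̂^(2d−2) − 1))`. -/
theorem thin_shell_strip_bounds
    (d : ℕ) (hd : 2 ≤ d) (rh ω W n : ℝ)
    (hr : 1 < rh) (hω0 : 0 ≤ ω) (hωM : ω ≤ rh ^ d)
    (hW0 : 0 < W)
    (hW : W ≤ Real.sqrt (rh ^ (2 * d - 2) - 1) * Real.sqrt (1 - ω / rh ^ d))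
    (hn1 : 1 ≤ n) (hn2 : n ≤ (d : ℝ) / ((d : ℝ) - 1)) :
    W ^ n ≤ ω + rh ^ d * W * Real.sqrt (1 - ω / rh ^ d) /
        Real.sqrt (rh ^ (2 * d - 2) - 1) ∧
    W ≤ Real.sqrt (((d : ℝ) - 1) / (d : ℝ) ^ ((d : ℝ) / ((d : ℝ) - 1))) *
      (ω + rh ^ d * W * Real.sqrt (1 - ω / rh ^ d) /
        Real.sqrt (rh ^ (2 * d - 2) - 1)) := by
  set R := rh ^ d
  set A := √(rh ^ (2 * d - 2) - 1)
  set s := √(1 - ω / R)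
  set c := ((d : ℝ) - 1) / (d : ℝ) ^ ((d : ℝ) / ((d : ℝ) - 1))
  have hd1 : (1 : ℝ) < d := by exact_mod_cast hd
  have hR : 0 < R := by positivity
  have hs_sq : s ^ 2 = 1 - ω / R := sq_sqrt (by rw [sub_nonneg, div_le_one hR]; exact hωM)
  have hs1 : s ≤ 1 := sqrt_le_one.2 (by linarith [div_nonneg hω0 hR.le])
  have hAs : 0 < A * s := hW0.trans_le hW
  have hAs_le : A * s ≤ A := mul_le_of_le_one_right (sqrt_nonneg _) hs1
  obtain ⟨t, ht0, ht1, rfl⟩ : ∃ t, 0 < t ∧ t ≤ 1 ∧ W = t * (A * s) :=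
    ⟨W / (A * s), div_pos hW0 hAs, (div_le_one hAs).2 hW, (div_mul_cancel₀ W hAs.ne').symm⟩
  set M := ω + R * (t * (A * s)) * s / A with hM
  have hmass : R * t ≤ M := by
    have hA : A ≠ 0 := (pos_of_mul_pos_left hAs (sqrt_nonneg _)).ne'
    have : M = R * t + ω * (1 - t) := by
      rw [hM, show R * (t * (A * s)) * s / A = R * t * s ^ 2 by field_simp, hs_sq]
      field_simp
      ring
    rw [this]
    linarith [mul_nonneg hω0 (sub_nonneg.2 ht1)]
  constructor
  · have hAs_pow : (A * s) ^ n ≤ R :=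
      calc (A * s) ^ n ≤ rh ^ (d : ℝ) := by
            refine rpow_le_rpow_of_le_rpow (a := ((d - 1 : ℕ) : ℝ)) hAs.le hr.le ?_ (by linarith) ?_
            · rw [rpow_natCast]
              exact hAs_le.trans (sqrt_pow_two_mul_sub_two_sub_one_le_pow (by linarith) d)
            · rw [Nat.cast_pred (by omega)]
              exact (le_div_iff₀' (by linarith)).1 hn2
        _ = R := rpow_natCast rh d
    calc (t * (A * s)) ^ n = t ^ n * (A * s) ^ n := mul_rpow ht0.le hAs.le
      _ ≤ t * R := mul_le_mul (rpow_le_self_of_le_one ht0.le ht1 hn1) hAs_pow (by positivity) ht0.le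
      _ ≤ M := by linarith
  · have hA : A ≤ √c * R :=
      calc A ≤ √(c * R ^ 2) := sqrt_le_sqrt (pow_two_mul_sub_two_sub_one_le hd (by positivity))
        _ = √c * R := by rw [sqrt_mul (by positivity), sqrt_sq hR.le]
    calc t * (A * s) = R * t * (A * s / R) := by field_simp
      _ ≤ M * (√c * R / R) :=
        mul_le_mul hmass (div_le_div_of_nonneg_right (hAs_le.trans hA) hR.le) (by positivity)
          (by positivity)
      _ = √c * M := by field_simp
end

section
/- Let q ≥ 0 be an integer and r_0 > 0, and define H_L(z) = (q·(z/r_0)^(2q+2) + 1) / ((z/r_0)^(2q+2) − 1) for z > r_0. Then for all real ρ, r with r_0 < ρ ≤ r, ∫_ρ^r (H_L(z) − 1)/z dz = log( (ρ²/r²) · √((r/r_0)^(2q+2) − 1) / √((ρ/r_0)^(2q+2) − 1) ). -/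
/-!
With `u(z) = (z/r₀)^(2q+2)` one has `z u'(z) = (2q+2) u(z)`, and `H_L − 1 = ((q−1)u + 2)/(u − 1)`,
so `(H_L(z) − 1)/z` is the derivative of `½ log(u(z) − 1) − 2 log z` on `z > r₀`.
The integral is therefore a difference of two values of this primitive, which the log laws
turn into the logarithm on the right.
-/

open MeasureTheory

noncomputable section

/-- The lower bound `H_L` on the coefficient `H` of the momentum constraint. -/
def lowerCoeff (q : ℕ) (r₀ z : ℝ) : ℝ :=
  ((q : ℝ) * (z / r₀) ^ (2 * q + 2) + 1) / ((z / r₀) ^ (2 * q + 2) - 1)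

def lowerCoeffPrimitive (q : ℕ) (r₀ z : ℝ) : ℝ :=
  1 / 2 * Real.log ((z / r₀) ^ (2 * q + 2) - 1) - 2 * Real.log z

end

lemma one_lt_div_pow_of_lt {a x : ℝ} (ha : 0 < a) (hx : a < x) {n : ℕ} (hn : n ≠ 0) :
    1 < (x / a) ^ n :=
  one_lt_pow₀ ((one_lt_div ha).2 hx) hn

lemma hasDerivAt_log_div_pow_sub_one {a z : ℝ} (n : ℕ) (ha : a ≠ 0) (hz : z ≠ 0)
    (hu : (z / a) ^ n ≠ 1) :
    HasDerivAt (fun z => Real.log ((z / a) ^ n - 1))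
      (n * (z / a) ^ n / (z * ((z / a) ^ n - 1))) z := by
  have hpow : HasDerivAt (fun z => (z / a) ^ n) (n * (z / a) ^ (n - 1) * (1 / a)) z := by
    simpa using ((hasDerivAt_id z).div_const a).fun_pow n
  refine ((hpow.sub_const 1).log (sub_ne_zero.2 hu)).congr_deriv ?_
  cases n with
  | zero => simp
  | succ m =>
    simp only [Nat.add_sub_cancel, pow_succ]
    field_simp

section

variable {q : ℕ} {r₀ : ℝ}

lemma hasDerivAt_lowerCoeffPrimitive (hr₀ : 0 < r₀) {z : ℝ} (hz : r₀ < z) :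
    HasDerivAt (lowerCoeffPrimitive q r₀) ((lowerCoeff q r₀ z - 1) / z) z := by
  have hz₀ : z ≠ 0 := (hr₀.trans hz).ne'
  have hu : 1 < (z / r₀) ^ (2 * q + 2) := one_lt_div_pow_of_lt hr₀ hz (by omega)
  have hlog := ((hasDerivAt_log_div_pow_sub_one (2 * q + 2) hr₀.ne' hz₀ hu.ne').const_mul
    (1 / 2 : ℝ)).sub ((Real.hasDerivAt_log hz₀).const_mul 2)
  refine hlog.congr_deriv ?_
  have hu₁ : (z / r₀) ^ (2 * q + 2) - 1 ≠ 0 := sub_ne_zero.2 hu.ne'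
  unfold lowerCoeff
  push_cast
  field_simp
  ring

lemma continuousOn_lowerCoeff_sub_one_div (hr₀ : 0 < r₀) :
    ContinuousOn (fun z => (lowerCoeff q r₀ z - 1) / z) (Set.Ioi r₀) := by
  intro z hz
  have hz₀ : z ≠ 0 := (hr₀.trans hz).ne'
  have hu₁ : (z / r₀) ^ (2 * q + 2) - 1 ≠ 0 :=
    sub_ne_zero.2 (one_lt_div_pow_of_lt hr₀ hz (by omega)).ne'
  unfold lowerCoeff
  exact ContinuousAt.continuousWithinAt (by fun_prop (disch := assumption))

lemma integral_lowerCoeff_sub_one_div (hr₀ : 0 < r₀) {ρ r : ℝ} (hρ : r₀ < ρ) (hρr : ρ ≤ r) :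
    ∫ z in ρ..r, (lowerCoeff q r₀ z - 1) / z =
      lowerCoeffPrimitive q r₀ r - lowerCoeffPrimitive q r₀ ρ := by
  have hsub : Set.uIcc ρ r ⊆ Set.Ioi r₀ := by
    rw [Set.uIcc_of_le hρr]
    exact fun z hz => hρ.trans_le hz.1
  exact intervalIntegral.integral_eq_sub_of_hasDerivAt
    (fun z hz => hasDerivAt_lowerCoeffPrimitive hr₀ (hsub hz))
    ((continuousOn_lowerCoeff_sub_one_div hr₀).mono hsub).intervalIntegrable

end

/-- closed-form integrating factor:
`∫_ρ^r (H_L(z) − 1)/z dz = log((ρ²/r²) √((r/r₀)^(2q+2) − 1)/√((ρ/r₀)^(2q+2) − 1))`,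
where `H_L(z) = (q(z/r₀)^(2q+2) + 1)/((z/r₀)^(2q+2) − 1)`. -/
theorem integrating_factor_closed_form
    (q : ℕ) (r₀ : ℝ) (hr₀ : 0 < r₀) (ρ r : ℝ) (hρ : r₀ < ρ) (hρr : ρ ≤ r) :
    ∫ z in ρ..r,
        (((q : ℝ) * (z / r₀) ^ (2 * q + 2) + 1) /
            ((z / r₀) ^ (2 * q + 2) - 1) - 1) / z =
      Real.log ((ρ ^ 2 / r ^ 2) * Real.sqrt ((r / r₀) ^ (2 * q + 2) - 1) /
        Real.sqrt ((ρ / r₀) ^ (2 * q + 2) - 1)) := by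
  have hr : r₀ < r := hρ.trans_le hρr
  have huρ : 0 < (ρ / r₀) ^ (2 * q + 2) - 1 :=
    sub_pos.2 (one_lt_div_pow_of_lt hr₀ hρ (by omega))
  have hur : 0 < (r / r₀) ^ (2 * q + 2) - 1 :=
    sub_pos.2 (one_lt_div_pow_of_lt hr₀ hr (by omega))
  have hρ₀ : 0 < ρ := hr₀.trans hρ
  have hr₀' : 0 < r := hr₀.trans hr
  change ∫ z in ρ..r, (lowerCoeff q r₀ z - 1) / z = _
  rw [integral_lowerCoeff_sub_one_div hr₀ hρ hρr, lowerCoeffPrimitive, lowerCoeffPrimitive,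
    Real.log_div (by positivity) (Real.sqrt_pos.2 huρ).ne',
    Real.log_mul (by positivity) (Real.sqrt_pos.2 hur).ne',
    Real.log_div (by positivity) (by positivity), Real.log_sqrt hur.le, Real.log_sqrt huρ.le,
    Real.log_pow, Real.log_pow]
  push_cast
  ring
end

section
/- Let q ≥ 0 be an integer, r_0 > 0 and r > r_0. Let J : [r_0, r] → ℝ be continuous, and let H : (r_0, r] → ℝ be continuous with H(z) ≥ H_L(z) := (q·(z/r_0)^(2q+2) + 1) / ((z/r_0)^(2q+2) − 1) for all z ∈ (r_0, r], and such that ∫_ρ^r (H(z) − 1)/z dz is finite for every ρ ∈ (r_0, r]. Then |∫_{r_0}^r ρ² · J(ρ) · exp(−∫_ρ^r (H(z) − 1)/z dz) dρ| ≤ (r² / √((r/r_0)^(2q+2) − 1)) · ∫_{r_0}^r |J(ρ)| · √((ρ/r_0)^(2q+2) − 1) dρ. -/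
/-!
Writing `x = (z/r₀)^(2q+2)`, the lower bound `H_L` is exactly the one for which the
integrating factor is explicit: `(H_L z - 1)/z = -(d/dz) log (z² / √(x - 1))`. Hence `H ≥ H_L`
gives `exp (-∫_ρ^r (H - 1)/z) ≤ (r²/√((r/r₀)^(2q+2) - 1)) · (√((ρ/r₀)^(2q+2) - 1)/ρ²)`,
which bounds the integrand pointwise by the integrand on the right-hand side.
-/

open MeasureTheory Real

namespace KPhiPhi

variable (q : ℕ) {r₀ : ℝ}

noncomputable def H_L (r₀ z : ℝ) : ℝ :=
  ((q : ℝ) * (z / r₀) ^ (2 * q + 2) + 1) / ((z / r₀) ^ (2 * q + 2) - 1)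

noncomputable def logWeight (r₀ z : ℝ) : ℝ :=
  2 * log z - log ((z / r₀) ^ (2 * q + 2) - 1) / 2

lemma sub_one_pos_of_lt (hr₀ : 0 < r₀) {z : ℝ} (hz : r₀ < z) :
    0 < (z / r₀) ^ (2 * q + 2) - 1 := by
  have : 1 < (z / r₀) ^ (2 * q + 2) := one_lt_pow₀ ((one_lt_div hr₀).mpr hz) (by omega)
  linarith

lemma exp_logWeight (hr₀ : 0 < r₀) {z : ℝ} (hz : r₀ < z) :
    exp (logWeight q r₀ z) = z ^ 2 / √((z / r₀) ^ (2 * q + 2) - 1) := by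
  have hx := sub_one_pos_of_lt q hr₀ hz
  have hz₀ : 0 < z := hr₀.trans hz
  have hlog : logWeight q r₀ z = log (z ^ 2 / √((z / r₀) ^ (2 * q + 2) - 1)) := by
    rw [log_div (by positivity) (by positivity), log_sqrt hx.le, log_pow, logWeight]
    push_cast
    ring
  rw [hlog, exp_log (by positivity)]

lemma hasDerivAt_logWeight (hr₀ : 0 < r₀) {z : ℝ} (hz : r₀ < z) :
    HasDerivAt (logWeight q r₀) (-((H_L q r₀ z - 1) / z)) z := by
  have hx := (sub_one_pos_of_lt q hr₀ hz).ne'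
  have hz₀ : z ≠ 0 := (hr₀.trans hz).ne'
  have hpow : HasDerivAt (fun z : ℝ => (z / r₀) ^ (2 * q + 2) - 1)
      ((2 * q + 2 : ℕ) * (z / r₀) ^ (2 * q + 1) * r₀⁻¹) z := by
    simpa [div_eq_mul_inv] using (((hasDerivAt_id z).div_const r₀).pow (2 * q + 2)).sub_const 1
  have hpow_succ : (z / r₀) ^ (2 * q + 1) * r₀⁻¹ = (z / r₀) ^ (2 * q + 2) * z⁻¹ := by
    rw [pow_succ (z / r₀) (2 * q + 1)]
    field_simp
  have hderiv : -((H_L q r₀ z - 1) / z) =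
      2 * z⁻¹ - (2 * q + 2 : ℕ) * (z / r₀) ^ (2 * q + 1) * r₀⁻¹ /
        ((z / r₀) ^ (2 * q + 2) - 1) / 2 := by
    rw [mul_assoc _ _ r₀⁻¹, hpow_succ]
    unfold H_L
    generalize (z / r₀) ^ (2 * q + 2) = x at hx ⊢
    push_cast
    field_simp
    ring
  rw [hderiv]
  exact ((hasDerivAt_log hz₀).const_mul 2).sub ((hpow.log hx).div_const 2)

lemma intervalIntegrable_H_L_sub_one_div (hr₀ : 0 < r₀) {ρ r : ℝ} (hρ : r₀ < ρ)
    (hρr : ρ ≤ r) :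
    IntervalIntegrable (fun z => (H_L q r₀ z - 1) / z) volume ρ r := by
  refine ContinuousOn.intervalIntegrable ?_
  rw [Set.uIcc_of_le hρr]
  refine ((ContinuousOn.div (by fun_prop) (by fun_prop) fun z hz => ?_).sub
    continuousOn_const).div continuousOn_id fun z hz => ?_
  · exact (sub_one_pos_of_lt q hr₀ (hρ.trans_le hz.1)).ne'
  · exact (hr₀.trans (hρ.trans_le hz.1)).ne'

lemma integral_H_L_sub_one_div (hr₀ : 0 < r₀) {ρ r : ℝ} (hρ : r₀ < ρ) (hρr : ρ ≤ r) :
    ∫ z in ρ..r, (H_L q r₀ z - 1) / z = logWeight q r₀ ρ - logWeight q r₀ r := by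
  have hderiv : ∀ z ∈ Set.uIcc ρ r, HasDerivAt (fun z => -logWeight q r₀ z)
      ((H_L q r₀ z - 1) / z) z := fun z hz => by
    have hz' : r₀ < z := hρ.trans_le (Set.uIcc_of_le hρr ▸ hz).1
    have := (hasDerivAt_logWeight q hr₀ hz').neg
    rwa [neg_neg] at this
  rw [intervalIntegral.integral_eq_sub_of_hasDerivAt hderiv
    (intervalIntegrable_H_L_sub_one_div q hr₀ hρ hρr)]
  ring

lemma exp_neg_integral_le_of_H_L_le (hr₀ : 0 < r₀) {ρ r : ℝ} (hρ : r₀ < ρ)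
    (hρr : ρ ≤ r) {H : ℝ → ℝ} (hHl : ∀ z ∈ Set.Ioc r₀ r, H_L q r₀ z ≤ H z)
    (hHint : IntervalIntegrable (fun z => (H z - 1) / z) volume ρ r) :
    exp (-∫ z in ρ..r, (H z - 1) / z) ≤
      r ^ 2 / √((r / r₀) ^ (2 * q + 2) - 1) * (√((ρ / r₀) ^ (2 * q + 2) - 1) / ρ ^ 2) := by
  have hmono : logWeight q r₀ ρ - logWeight q r₀ r ≤ ∫ z in ρ..r, (H z - 1) / z := by
    rw [← integral_H_L_sub_one_div q hr₀ hρ hρr]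
    refine intervalIntegral.integral_mono_on hρr
      (intervalIntegrable_H_L_sub_one_div q hr₀ hρ hρr) hHint fun z hz => ?_
    have hz₀ : 0 < z := hr₀.trans (hρ.trans_le hz.1)
    gcongr
    exact hHl z ⟨hρ.trans_le hz.1, hz.2⟩
  have hs : √((ρ / r₀) ^ (2 * q + 2) - 1) ≠ 0 :=
    (sqrt_pos.mpr (sub_one_pos_of_lt q hr₀ hρ)).ne'
  calc exp (-∫ z in ρ..r, (H z - 1) / z)
      ≤ exp (logWeight q r₀ r - logWeight q r₀ ρ) := exp_le_exp.mpr (by linarith)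
    _ = _ := by
      rw [exp_sub, exp_logWeight q hr₀ (hρ.trans_le hρr), exp_logWeight q hr₀ hρ]
      field_simp

end KPhiPhi

theorem K_phiphi_bound_general
    (q : ℕ) (r₀ r : ℝ) (hr₀ : 0 < r₀) (hr : r₀ < r)
    (J H : ℝ → ℝ) (hJ : ContinuousOn J (Set.Icc r₀ r))
    (hHl : ∀ z ∈ Set.Ioc r₀ r,
      ((q : ℝ) * (z / r₀) ^ (2 * q + 2) + 1) / ((z / r₀) ^ (2 * q + 2) - 1) ≤ H z)
    (hHint : ∀ ρ ∈ Set.Ioc r₀ r,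
      IntervalIntegrable (fun z => (H z - 1) / z) MeasureTheory.volume ρ r) :
    |∫ ρ in r₀..r, ρ ^ 2 * J ρ * Real.exp (-∫ z in ρ..r, (H z - 1) / z)| ≤
      (r ^ 2 / Real.sqrt ((r / r₀) ^ (2 * q + 2) - 1)) *
        ∫ ρ in r₀..r, |J ρ| * Real.sqrt ((ρ / r₀) ^ (2 * q + 2) - 1) := by
  set C := r ^ 2 / √((r / r₀) ^ (2 * q + 2) - 1)
  have hbound : ∀ ρ ∈ Set.Ioc r₀ r, ‖ρ ^ 2 * J ρ * exp (-∫ z in ρ..r, (H z - 1) / z)‖ ≤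
      C * (|J ρ| * √((ρ / r₀) ^ (2 * q + 2) - 1)) := fun ρ hρ => by
    have hρ₀ : 0 < ρ := hr₀.trans hρ.1
    calc ‖ρ ^ 2 * J ρ * exp (-∫ z in ρ..r, (H z - 1) / z)‖
        = ρ ^ 2 * |J ρ| * exp (-∫ z in ρ..r, (H z - 1) / z) := by
          rw [Real.norm_eq_abs, abs_mul, abs_mul, abs_of_pos (by positivity),
            abs_of_pos (exp_pos _)]
      _ ≤ ρ ^ 2 * |J ρ| * (C * (√((ρ / r₀) ^ (2 * q + 2) - 1) / ρ ^ 2)) := by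
          gcongr
          exact KPhiPhi.exp_neg_integral_le_of_H_L_le q hr₀ hρ.1 hρ.2 hHl (hHint ρ hρ)
      _ = C * (|J ρ| * √((ρ / r₀) ^ (2 * q + 2) - 1)) := by
          field_simp
  have hint : IntervalIntegrable (fun ρ => C * (|J ρ| * √((ρ / r₀) ^ (2 * q + 2) - 1)))
      volume r₀ r := by
    refine ContinuousOn.intervalIntegrable ?_
    rw [Set.uIcc_of_le hr.le]
    exact continuousOn_const.mul (hJ.abs.mul (by fun_prop))
  rw [← intervalIntegral.integral_const_mul]
  exact intervalIntegral.norm_integral_le_of_norm_le hr.le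
    (Filter.Eventually.of_forall hbound) hint

/-- Bound on the momentum-constraint solution:
`|∫_{r₀}^r ρ² J(ρ) exp(−∫_ρ^r (H(z)−1)/z dz) dρ|
  ≤ (r²/√((r/r₀)^(2q+2) − 1)) ∫_{r₀}^r |J(ρ)| √((ρ/r₀)^(2q+2) − 1) dρ`
whenever `H ≥ H_L` on `(r₀, r]`. -/
theorem K_phiphi_bound
    (q : ℕ) (r₀ r : ℝ) (hr₀ : 0 < r₀) (hr : r₀ < r)
    (J H : ℝ → ℝ) (hJ : ContinuousOn J (Set.Icc r₀ r))
    (hH : ContinuousOn H (Set.Ioc r₀ r))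
    (hHl : ∀ z ∈ Set.Ioc r₀ r,
      ((q : ℝ) * (z / r₀) ^ (2 * q + 2) + 1) / ((z / r₀) ^ (2 * q + 2) - 1) ≤ H z)
    (hHint : ∀ ρ ∈ Set.Ioc r₀ r,
      IntervalIntegrable (fun z => (H z - 1) / z) MeasureTheory.volume ρ r) :
    |∫ ρ in r₀..r, ρ ^ 2 * J ρ * Real.exp (-∫ z in ρ..r, (H z - 1) / z)| ≤
      (r ^ 2 / Real.sqrt ((r / r₀) ^ (2 * q + 2) - 1)) *
        ∫ ρ in r₀..r, |J ρ| * Real.sqrt ((ρ / r₀) ^ (2 * q + 2) - 1) :=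
  K_phiphi_bound_general q r₀ r hr₀ hr J H hJ hHl hHint
end

section
/- Let q ≥ 0 be an integer and r_0 > 0. Let J : [r_0, ∞) → ℝ be continuous with ∫_{r_0}^∞ |J(ρ)| · √(ρ^(2q+2) − r_0^(2q+2)) dρ < ∞, and let H : (r_0, ∞) → ℝ be continuous with H(z) ≥ H_L(z) := (q·(z/r_0)^(2q+2) + 1)/((z/r_0)^(2q+2) − 1) for all z > r_0, and such that ∫_ρ^r (H(z) − 1)/z dz is finite whenever r_0 < ρ ≤ r. Define K(r) = −∫_{r_0}^r ρ² · J(ρ) · exp(−∫_ρ^r (H(z) − 1)/z dz) dρ for r > r_0. Then limsup_{r→∞} r^(q−1) · |K(r)| ≤ ∫_{r_0}^∞ |J(ρ)| · √(ρ^(2q+2) − r_0^(2q+2)) dρ. -/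
/-! The integrating factor `exp (-∫_ρ^r (H - 1)/z)` is decreasing in `H`, so it is dominated by
the one for the lower bound `H_L`, which is explicit: `(H_L - 1)/z` is the derivative of
`log (√(z^(2q+2) - r₀^(2q+2)) / z²)`. This gives
`ρ² exp (-∫_ρ^r (H - 1)/z) ≤ r² √(ρ^(2q+2) - r₀^(2q+2)) / √(r^(2q+2) - r₀^(2q+2))`, hence
`r^(q-1) |K r| ≤ r^(q+1) / √(r^(2q+2) - r₀^(2q+2)) · ∫_{r₀}^∞ |J| √(ρ^(2q+2) - r₀^(2q+2))`,
and the prefactor tends to `1`. -/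

open MeasureTheory Set Filter Topology Real

noncomputable def lowerH (q : ℕ) (r₀ z : ℝ) : ℝ :=
  ((q : ℝ) * (z / r₀) ^ (2 * q + 2) + 1) / ((z / r₀) ^ (2 * q + 2) - 1)

noncomputable def lowerPotential (q : ℕ) (r₀ z : ℝ) : ℝ :=
  (1 / 2) * log (z ^ (2 * q + 2) - r₀ ^ (2 * q + 2)) - 2 * log z

section LowerBound

variable {q : ℕ} {r₀ : ℝ}

lemma continuousOn_lowerH_sub_one_div (hr₀ : 0 < r₀) :
    ContinuousOn (fun z => (lowerH q r₀ z - 1) / z) (Ioi r₀) := by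
  refine ContinuousOn.div (ContinuousOn.sub (ContinuousOn.div (by fun_prop) (by fun_prop) ?_)
    continuousOn_const) continuousOn_id fun z hz => (hr₀.trans hz).ne'
  intro z hz
  exact (sub_pos.mpr (one_lt_pow₀ ((one_lt_div hr₀).mpr hz) (by omega))).ne'

lemma hasDerivAt_lowerPotential (hr₀ : 0 < r₀) {z : ℝ} (hz : r₀ < z) :
    HasDerivAt (lowerPotential q r₀) ((lowerH q r₀ z - 1) / z) z := by
  have hz₀ : 0 < z := hr₀.trans hz
  have hne : z ^ (2 * q + 2) - r₀ ^ (2 * q + 2) ≠ 0 :=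
    (sub_pos.mpr (pow_lt_pow_left₀ hz hr₀.le (by omega))).ne'
  have hsub : HasDerivAt (fun z : ℝ => z ^ (2 * q + 2) - r₀ ^ (2 * q + 2))
      ((2 * q + 2 : ℕ) * z ^ (2 * q + 1)) z := by
    simpa using (hasDerivAt_pow (2 * q + 2) z).sub_const (r₀ ^ (2 * q + 2))
  refine (((hsub.log hne).const_mul (1 / 2 : ℝ)).sub
    ((hasDerivAt_log hz₀.ne').const_mul 2)).congr_deriv ?_
  have : r₀ ≠ 0 := hr₀.ne'
  rw [lowerH, div_pow]
  field_simp
  push_cast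
  ring

lemma integral_lowerH_sub_one_div (hr₀ : 0 < r₀) {ρ r : ℝ} (hρ : r₀ < ρ) (hρr : ρ ≤ r) :
    ∫ z in ρ..r, (lowerH q r₀ z - 1) / z = lowerPotential q r₀ r - lowerPotential q r₀ ρ := by
  have hsub : uIcc ρ r ⊆ Ioi r₀ := by
    rw [uIcc_of_le hρr]
    exact fun z hz => hρ.trans_le hz.1
  exact intervalIntegral.integral_eq_sub_of_hasDerivAt
    (fun z hz => hasDerivAt_lowerPotential hr₀ (hsub hz))
    ((continuousOn_lowerH_sub_one_div hr₀).mono hsub).intervalIntegrable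

lemma exp_lowerPotential (hr₀ : 0 < r₀) {z : ℝ} (hz : r₀ < z) :
    exp (lowerPotential q r₀ z) = √(z ^ (2 * q + 2) - r₀ ^ (2 * q + 2)) / z ^ 2 := by
  have hpos : 0 < z ^ (2 * q + 2) - r₀ ^ (2 * q + 2) :=
    sub_pos.mpr (pow_lt_pow_left₀ hz hr₀.le (by omega))
  rw [lowerPotential, exp_sub, mul_comm (1 / 2), mul_comm 2 (log z), exp_mul, exp_mul, exp_log hpos,
    exp_log (hr₀.trans hz), ← sqrt_eq_rpow, rpow_two]

lemma sq_mul_exp_neg_integral_le (hr₀ : 0 < r₀) {H : ℝ → ℝ}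
    (hHl : ∀ z ∈ Ioi r₀, lowerH q r₀ z ≤ H z) {ρ r : ℝ} (hρ : r₀ < ρ) (hρr : ρ ≤ r)
    (hHint : IntervalIntegrable (fun z => (H z - 1) / z) volume ρ r) :
    ρ ^ 2 * exp (-∫ z in ρ..r, (H z - 1) / z) ≤
      r ^ 2 / √(r ^ (2 * q + 2) - r₀ ^ (2 * q + 2)) * √(ρ ^ (2 * q + 2) - r₀ ^ (2 * q + 2)) := by
  have hr : r₀ < r := hρ.trans_le hρr
  have hmono : lowerPotential q r₀ r - lowerPotential q r₀ ρ ≤ ∫ z in ρ..r, (H z - 1) / z := by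
    rw [← integral_lowerH_sub_one_div hr₀ hρ hρr]
    refine intervalIntegral.integral_mono_on hρr ?_ hHint fun z hz => ?_
    · refine ((continuousOn_lowerH_sub_one_div hr₀).mono ?_).intervalIntegrable
      rw [uIcc_of_le hρr]
      exact fun z hz => hρ.trans_le hz.1
    · have hz : r₀ < z := hρ.trans_le hz.1
      exact div_le_div_of_nonneg_right (sub_le_sub_right (hHl z hz) 1) (hr₀.trans hz).le
  calc ρ ^ 2 * exp (-∫ z in ρ..r, (H z - 1) / z)
      ≤ ρ ^ 2 * exp (lowerPotential q r₀ ρ - lowerPotential q r₀ r) := by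
        gcongr
        linarith
    _ = _ := by
        have : ρ ≠ 0 := (hr₀.trans hρ).ne'
        rw [exp_sub, exp_lowerPotential hr₀ hρ, exp_lowerPotential hr₀ hr]
        field_simp

lemma abs_integral_sq_mul_exp_neg_integral_le (hr₀ : 0 < r₀) {J H : ℝ → ℝ}
    (hJint : IntegrableOn (fun ρ => |J ρ| * √(ρ ^ (2 * q + 2) - r₀ ^ (2 * q + 2))) (Ioi r₀))
    (hHl : ∀ z ∈ Ioi r₀, lowerH q r₀ z ≤ H z)
    (hHint : ∀ ρ r : ℝ, r₀ < ρ → ρ ≤ r → IntervalIntegrable (fun z => (H z - 1) / z) volume ρ r)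
    {r : ℝ} (hr : r₀ < r) :
    |∫ ρ in r₀..r, ρ ^ 2 * J ρ * exp (-∫ z in ρ..r, (H z - 1) / z)| ≤
      r ^ 2 / √(r ^ (2 * q + 2) - r₀ ^ (2 * q + 2)) *
        ∫ ρ in Ioi r₀, |J ρ| * √(ρ ^ (2 * q + 2) - r₀ ^ (2 * q + 2)) := by
  set C := r ^ 2 / √(r ^ (2 * q + 2) - r₀ ^ (2 * q + 2))
  have hpointwise : ∀ ρ ∈ Ioc r₀ r,
      ‖ρ ^ 2 * J ρ * exp (-∫ z in ρ..r, (H z - 1) / z)‖ ≤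
        C * (|J ρ| * √(ρ ^ (2 * q + 2) - r₀ ^ (2 * q + 2))) := fun ρ hρ => by
    have hfactor := sq_mul_exp_neg_integral_le hr₀ hHl hρ.1 hρ.2 (hHint ρ r hρ.1 hρ.2)
    rw [norm_mul, norm_mul, norm_pow, norm_of_nonneg (exp_nonneg _), Real.norm_eq_abs,
      Real.norm_eq_abs, abs_of_pos (hr₀.trans hρ.1)]
    calc ρ ^ 2 * |J ρ| * exp (-∫ z in ρ..r, (H z - 1) / z)
        = |J ρ| * (ρ ^ 2 * exp (-∫ z in ρ..r, (H z - 1) / z)) := by ring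
      _ ≤ |J ρ| * (C * √(ρ ^ (2 * q + 2) - r₀ ^ (2 * q + 2))) := by gcongr
      _ = _ := by ring
  have hJint' := hJint.mono_set (Ioc_subset_Ioi_self : Ioc r₀ r ⊆ Ioi r₀)
  calc |∫ ρ in r₀..r, ρ ^ 2 * J ρ * exp (-∫ z in ρ..r, (H z - 1) / z)|
      ≤ ∫ ρ in r₀..r, C * (|J ρ| * √(ρ ^ (2 * q + 2) - r₀ ^ (2 * q + 2))) :=
        intervalIntegral.norm_integral_le_of_norm_le hr.le (.of_forall hpointwise)
          ((intervalIntegrable_iff_integrableOn_Ioc_of_le hr.le).mpr (hJint'.const_mul C))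
    _ = C * ∫ ρ in Ioc r₀ r, |J ρ| * √(ρ ^ (2 * q + 2) - r₀ ^ (2 * q + 2)) := by
        rw [intervalIntegral.integral_const_mul, intervalIntegral.integral_of_le hr.le]
    _ ≤ C * ∫ ρ in Ioi r₀, |J ρ| * √(ρ ^ (2 * q + 2) - r₀ ^ (2 * q + 2)) := by
        refine mul_le_mul_of_nonneg_left (setIntegral_mono_set hJint
          (.of_forall fun ρ => by positivity) Ioc_subset_Ioi_self.eventuallyLE) ?_
        positivity

end LowerBound

lemma tendsto_rpow_mul_sq_div_sqrt_sub_pow (q : ℕ) (r₀ : ℝ) :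
    Tendsto (fun r : ℝ => r ^ ((q : ℝ) - 1) * (r ^ 2 / √(r ^ (2 * q + 2) - r₀ ^ (2 * q + 2))))
      atTop (𝓝 1) := by
  have hsmall : Tendsto (fun r : ℝ => (r₀ / r) ^ (2 * q + 2)) atTop (𝓝 0) := by
    simpa using ((tendsto_const_nhds (x := r₀)).div_atTop tendsto_id).pow (2 * q + 2)
  have hlim : Tendsto (fun r : ℝ => √((1 - (r₀ / r) ^ (2 * q + 2))⁻¹)) atTop (𝓝 1) := by
    simpa using ((tendsto_const_nhds.sub hsmall).inv₀ (by norm_num : (1 : ℝ) - 0 ≠ 0)).sqrt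
  refine hlim.congr' ?_
  filter_upwards [eventually_gt_atTop 0] with r hr
  have hrn : r ^ (2 * q + 2) ≠ 0 := by positivity
  have hrpow : r ^ ((q : ℝ) - 1) * r ^ 2 = r ^ (q + 1) := by
    rw [← rpow_natCast r 2, ← rpow_add hr, ← rpow_natCast r (q + 1)]
    congr 1
    push_cast
    ring
  have hsqrt : √(r ^ (2 * q + 2)) = r ^ (q + 1) := by
    rw [show 2 * q + 2 = (q + 1) * 2 by ring, pow_mul, sqrt_sq (by positivity)]
  rw [div_pow, one_sub_div hrn, inv_div, sqrt_div (by positivity), hsqrt, ← mul_div_assoc,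
    hrpow]

theorem K_phiphi_limsup_bound_general
    (q : ℕ) (r₀ : ℝ) (hr₀ : 0 < r₀)
    (J H : ℝ → ℝ)
    (hJint : IntegrableOn
      (fun ρ : ℝ => |J ρ| * Real.sqrt (ρ ^ (2 * q + 2) - r₀ ^ (2 * q + 2)))
      (Set.Ioi r₀))
    (hHl : ∀ z ∈ Set.Ioi r₀,
      ((q : ℝ) * (z / r₀) ^ (2 * q + 2) + 1) / ((z / r₀) ^ (2 * q + 2) - 1) ≤ H z)
    (hHint : ∀ ρ r : ℝ, r₀ < ρ → ρ ≤ r →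
      IntervalIntegrable (fun z => (H z - 1) / z) MeasureTheory.volume ρ r)
    (K : ℝ → ℝ)
    (hK : ∀ r, K r =
      -∫ ρ in r₀..r, ρ ^ 2 * J ρ * Real.exp (-∫ z in ρ..r, (H z - 1) / z)) :
    Filter.limsup (fun r : ℝ => r ^ ((q : ℝ) - 1) * |K r|) Filter.atTop ≤
      ∫ ρ in Set.Ioi r₀, |J ρ| * Real.sqrt (ρ ^ (2 * q + 2) - r₀ ^ (2 * q + 2)) := by
  set I := ∫ ρ in Ioi r₀, |J ρ| * √(ρ ^ (2 * q + 2) - r₀ ^ (2 * q + 2))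
  set c := fun r : ℝ => r ^ ((q : ℝ) - 1) * (r ^ 2 / √(r ^ (2 * q + 2) - r₀ ^ (2 * q + 2)))
  have hcI : Tendsto (fun r => c r * I) atTop (𝓝 I) := by
    simpa using (tendsto_rpow_mul_sq_div_sqrt_sub_pow q r₀).mul_const I
  have hbound : ∀ᶠ r in atTop, r ^ ((q : ℝ) - 1) * |K r| ≤ c r * I := by
    filter_upwards [eventually_gt_atTop r₀] with r hr
    rw [hK, abs_neg, mul_assoc]
    exact mul_le_mul_of_nonneg_left
      (abs_integral_sq_mul_exp_neg_integral_le hr₀ hJint hHl hHint hr)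
      (rpow_nonneg (hr₀.trans hr).le _)
  have hnonneg : ∀ᶠ r in atTop, 0 ≤ r ^ ((q : ℝ) - 1) * |K r| := by
    filter_upwards [eventually_ge_atTop 0] with r hr
    positivity
  calc limsup (fun r : ℝ => r ^ ((q : ℝ) - 1) * |K r|) atTop
      ≤ limsup (fun r => c r * I) atTop :=
        limsup_le_limsup hbound (isBoundedUnder_of_eventually_ge hnonneg).isCoboundedUnder_le
          hcI.isBoundedUnder_le
    _ = I := hcI.limsup_eq

/-- Asymptotic bound
`limsup_{r→∞} r^(q−1) |K(r)| ≤ ∫_{r₀}^∞ |J(ρ)| √(ρ^(2q+2) − r₀^(2q+2)) dρ` for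
`K(r) = −∫_{r₀}^r ρ² J(ρ) exp(−∫_ρ^r (H(z)−1)/z dz) dρ` with `H ≥ H_L`. -/
theorem K_phiphi_limsup_bound
    (q : ℕ) (r₀ : ℝ) (hr₀ : 0 < r₀)
    (J H : ℝ → ℝ) (hJ : ContinuousOn J (Set.Ici r₀))
    (hJint : IntegrableOn
      (fun ρ : ℝ => |J ρ| * Real.sqrt (ρ ^ (2 * q + 2) - r₀ ^ (2 * q + 2)))
      (Set.Ioi r₀))
    (hH : ContinuousOn H (Set.Ioi r₀))
    (hHl : ∀ z ∈ Set.Ioi r₀,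
      ((q : ℝ) * (z / r₀) ^ (2 * q + 2) + 1) / ((z / r₀) ^ (2 * q + 2) - 1) ≤ H z)
    (hHint : ∀ ρ r : ℝ, r₀ < ρ → ρ ≤ r →
      IntervalIntegrable (fun z => (H z - 1) / z) MeasureTheory.volume ρ r)
    (K : ℝ → ℝ)
    (hK : ∀ r, K r =
      -∫ ρ in r₀..r, ρ ^ 2 * J ρ * Real.exp (-∫ z in ρ..r, (H z - 1) / z)) :
    Filter.limsup (fun r : ℝ => r ^ ((q : ℝ) - 1) * |K r|) Filter.atTop ≤
      ∫ ρ in Set.Ioi r₀, |J ρ| * Real.sqrt (ρ ^ (2 * q + 2) - r₀ ^ (2 * q + 2)) :=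
  K_phiphi_limsup_bound_general q r₀ hr₀ J H hJint hHl hHint K hK
end
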